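/- arXiv:2112.02909 — 6 statements merged into one kernel-verified Lean document; each statement's English description precedes it below -/
import Mathlib

section
/- Let H be an ordered graph on h vertices with a local barrier, and let r := χ_<(H). Then for every n ∈ ℕ there exist i ≠ j in [r+1] and an n-vertex ordered graph G with minimum degree δ(G) > (1 - 1/r)n - 1 such that some vertex of G lies in no copy of H in G. In particular G contains no H-cover and no perfect H-tiling. -/
open Finset

def IsCopy {h n : ℕ} (H : SimpleGraph (Fin h)) (G : SimpleGraph (Fin n))
    (f : Fin h → Fin n) : Prop :=
  StrictMono f ∧ ∀ i j, H.Adj i j → G.Adj (f i) (f j)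

def TilesOn {h n : ℕ} (H : SimpleGraph (Fin h)) (G : SimpleGraph (Fin n))
    (X : Set (Fin n)) : Prop :=
  ∃ S : Set (Fin h → Fin n),
    (∀ f ∈ S, IsCopy H G f ∧ Set.range f ⊆ X) ∧
    (∀ v ∈ X, ∃! f, f ∈ S ∧ v ∈ Set.range f)

def HasPerfectTiling {h n : ℕ} (H : SimpleGraph (Fin h)) (G : SimpleGraph (Fin n)) : Prop :=
  TilesOn H G Set.univ

/-- An interval `r`-colouring of an ordered graph `H` on `[h]`, encoded by its boundary
function `b`: the `k`-th class (for `k < r`) is the interval `[b k, b (k+1))`. -/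
structure IColouring {h : ℕ} (H : SimpleGraph (Fin h)) (r : ℕ) where
  b : ℕ → ℕ
  mono : Monotone b
  first : b 0 = 0
  last : b r = h
  indep : ∀ k < r, ∀ i j : Fin h,
    b k ≤ (i : ℕ) → (i : ℕ) < b (k + 1) → b k ≤ (j : ℕ) → (j : ℕ) < b (k + 1) → ¬ H.Adj i j

/-- The interval chromatic number. -/
noncomputable def chiLt {h : ℕ} (H : SimpleGraph (Fin h)) : ℕ :=
  sInf {r | Nonempty (IColouring H r)}

/-- `v` and `w` lie in the same class of the interval partition with boundaries `c`. -/
def SameClass (c : ℕ → ℕ) (v w : ℕ) : Prop := ∀ k, c k ≤ v ↔ c k ≤ w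

/-- The ordered complete multipartite graph on `[n]` whose parts are the intervals with
boundary function `c`. -/
def OrdMultiB (n : ℕ) (c : ℕ → ℕ) : SimpleGraph (Fin n) :=
  SimpleGraph.fromRel (fun v w => ¬ SameClass c (v : ℕ) (w : ℕ))

/-- boundaries from part sizes -/
def bnd (q : ℕ → ℕ) (i : ℕ) : ℕ := ∑ j ∈ Finset.range i, q j

noncomputable def deg {n : ℕ} (G : SimpleGraph (Fin n)) (v : Fin n) : ℕ :=
  {w | G.Adj v w}.ncard

noncomputable def minDeg {n : ℕ} (G : SimpleGraph (Fin n)) : ℕ :=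
  sInf (Set.range (deg G))

/-- `B`, the complete `k`-partite graph with part sizes `p`, is a bottlegraph of `H`:
for every permutation `σ` of the parts (every interval labelling) there is a blow-up
factor `t` such that the ordered blow-up contains a perfect `H`-tiling. -/
def IsBottlegraph {h : ℕ} (H : SimpleGraph (Fin h)) (k : ℕ) (p : Fin k → ℕ) : Prop :=
  (∀ i, 0 < p i) ∧
  ∀ σ : Equiv.Perm (Fin k), ∃ t : ℕ, 0 < t ∧
    HasPerfectTiling H
      (OrdMultiB (bnd (fun j => if hj : j < k then t * p (σ ⟨j, hj⟩) else 0) k)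
        (bnd (fun j => if hj : j < k then t * p (σ ⟨j, hj⟩) else 0)))

noncomputable def minPart (k : ℕ) (p : Fin k → ℕ) : ℕ := sInf (Set.range fun i => p i)

/-- The critical chromatic number of a complete `k`-partite graph with part sizes `p`. -/
noncomputable def chiCrParts (k : ℕ) (p : Fin k → ℕ) : ℚ :=
  ((k : ℚ) - 1) * (∑ i, (p i : ℚ)) / ((∑ i, (p i : ℚ)) - (minPart k p : ℚ))

/-- The ordered critical chromatic number. -/
noncomputable def chiCrStar {h : ℕ} (H : SimpleGraph (Fin h)) : ℝ :=
  sInf {x : ℝ | ∃ (k : ℕ) (p : Fin k → ℕ), IsBottlegraph H k p ∧ x = (chiCrParts k p : ℝ)}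

/-- `H` has a local barrier with respect to (0-indexed) classes `i ≠ j` among the `r+1`
interval classes: in every interval `(r+1)`-colouring of `H` in which class `i` is a
singleton `{v}`, there is an edge between `v` and class `j`. -/
def LocalBarrierAt {h : ℕ} (H : SimpleGraph (Fin h)) (r i j : ℕ) : Prop :=
  ∀ C : IColouring H (r + 1), C.b i + 1 = C.b (i + 1) →
    ∃ v w : Fin h, (v : ℕ) = C.b i ∧ C.b j ≤ (w : ℕ) ∧ (w : ℕ) < C.b (j + 1) ∧ H.Adj v w

def HasLocalBarrier {h : ℕ} (H : SimpleGraph (Fin h)) (r : ℕ) : Prop :=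
  ∃ i j, i < r + 1 ∧ j < r + 1 ∧ i ≠ j ∧ LocalBarrierAt H r i j

/-! Take the ordered complete `(r + 1)`-partite graph on `[n]` whose `i`-th part is a single
vertex `v`, whose `j`-th part has `t = ⌊(n - 1)/r⌋` vertices and whose other parts have `t` or
`t + 1`, and delete the edges between `v` and the `j`-th part. Every vertex then misses at most
`t + 1 < n/r + 1` vertices, which gives the degree bound. A copy of `H` through `v` pulls the
parts back to an interval `(r + 1)`-colouring of `H` whose `i`-th class is the singleton
preimage of `v` and has no edge to the `j`-th class, contradicting the local barrier. -/

section PullBack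

variable {h : ℕ} {σ : Fin h → ℕ}

/-- For monotone `σ`, the boundaries of the interval colouring by `σ`. -/
def countBelow (σ : Fin h → ℕ) (k : ℕ) : ℕ := #{a | σ a < k}

lemma countBelow_le_iff (hσ : Monotone σ) (k : ℕ) (a : Fin h) :
    countBelow σ k ≤ a ↔ k ≤ σ a := by
  constructor
  · intro hk
    by_contra! hlt
    have hsub : Iic a ⊆ ({a' | σ a' < k} : Finset (Fin h)) := fun a' ha' => by
      simpa using (hσ (mem_Iic.1 ha')).trans_lt hlt
    have := card_le_card hsub
    rw [Fin.card_Iic] at this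
    exact absurd hk (by unfold countBelow; omega)
  · intro hk
    have hsub : ({a' | σ a' < k} : Finset (Fin h)) ⊆ Iio a := fun a' ha' => by
      simp only [mem_filter, mem_univ, true_and] at ha'
      exact mem_Iio.2 (hσ.reflect_lt (ha'.trans_le hk))
    simpa [countBelow, Fin.card_Iio] using card_le_card hsub

lemma mem_Ico_countBelow_iff (hσ : Monotone σ) (k : ℕ) (a : Fin h) :
    (a : ℕ) ∈ Set.Ico (countBelow σ k) (countBelow σ (k + 1)) ↔ σ a = k := by
  rw [Set.mem_Ico, countBelow_le_iff hσ, ← not_le, countBelow_le_iff hσ]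
  omega

def IColouring.ofMonotone {H : SimpleGraph (Fin h)} {m : ℕ} (hσ : Monotone σ)
    (hσm : ∀ a, σ a < m) (hσH : ∀ a b, H.Adj a b → σ a ≠ σ b) : IColouring H m where
  b := countBelow σ
  mono _ _ hkl := card_le_card fun _ ha => by
    simp only [mem_filter, mem_univ, true_and] at ha ⊢
    omega
  first := by simp [countBelow]
  last := by simp [countBelow, hσm]
  indep k _ a a' ha₁ ha₂ ha'₁ ha'₂ hadj := by
    have ha := (mem_Ico_countBelow_iff hσ k a).1 ⟨ha₁, ha₂⟩
    have ha' := (mem_Ico_countBelow_iff hσ k a').1 ⟨ha'₁, ha'₂⟩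
    exact hσH a a' hadj (ha.trans ha'.symm)

lemma countBelow_succ (σ : Fin h → ℕ) (k : ℕ) :
    countBelow σ (k + 1) = countBelow σ k + #{a | σ a = k} := by
  rw [countBelow, countBelow, ← card_union_of_disjoint]
  · congr 1
    ext a
    simp only [mem_filter, mem_univ, true_and, mem_union]
    omega
  · exact disjoint_filter.2 fun a _ h₁ h₂ => by omega

end PullBack

/-- The heart of the construction: pulling the interval partition of `G` back along a copy
of `H` through `v` yields an interval colouring of `H` whose class `i` is a singleton, so the
local barrier forces an edge from `v` into class `j`. -/
theorem notMem_range_of_localBarrierAt {h n r i j : ℕ} {H : SimpleGraph (Fin h)}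
    {G : SimpleGraph (Fin n)} (hH : LocalBarrierAt H r i j) {π : Fin n → ℕ} (hπ : Monotone π)
    (hπr : ∀ x, π x < r + 1) (hG : ∀ x y, G.Adj x y → π x ≠ π y) {v : Fin n}
    (hv : ∀ x, π x = i ↔ x = v) (hvj : ∀ x, π x = j → ¬ G.Adj v x)
    {f : Fin h → Fin n} (hf : IsCopy H G f) : v ∉ Set.range f := by
  rintro ⟨a, rfl⟩
  have hσ : Monotone (π ∘ f) := hπ.comp hf.1.monotone
  let C : IColouring H (r + 1) :=
    .ofMonotone hσ (fun _ => hπr _) fun a b hab => hG _ _ (hf.2 a b hab)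
  have hfibre : #{a' | (π ∘ f) a' = i} = 1 :=
    card_eq_one.2 ⟨a, by ext a'; simp [hv, hf.1.injective.eq_iff]⟩
  have hsingleton : C.b i + 1 = C.b (i + 1) := by
    simp only [C, IColouring.ofMonotone, countBelow_succ, hfibre]
  obtain ⟨a', w, ha', hw₁, hw₂, hadj⟩ := hH C hsingleton
  have ha : (a : ℕ) ∈ Set.Ico (C.b i) (C.b (i + 1)) :=
    (mem_Ico_countBelow_iff hσ i a).2 ((hv _).2 rfl)
  have ha'a : a' = a := Fin.ext (by rw [Set.mem_Ico] at ha; omega)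
  have hwj : π (f w) = j := (mem_Ico_countBelow_iff hσ j w).1 ⟨hw₁, hw₂⟩
  exact hvj _ hwj (ha'a ▸ hf.2 _ _ hadj)

lemma ncard_setOf_val_mem_Ico {n a b : ℕ} (hb : b ≤ n) :
    {x : Fin n | (x : ℕ) ∈ Set.Ico a b}.ncard = b - a := by
  rw [← Set.ncard_image_of_injective _ Fin.val_injective, ← Set.ncard_Ico_nat]
  congr 1
  ext y
  constructor
  · rintro ⟨x, hx, rfl⟩
    exact hx
  · intro hy
    exact ⟨⟨y, hy.2.trans_le hb⟩, hy, rfl⟩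

lemma findGreatest_eq_iff_mem_Ico {c : ℕ → ℕ} (hc : Monotone c) (h0 : c 0 = 0) {r x k : ℕ}
    (hx : x < c (r + 1)) (hk : k ≤ r) :
    Nat.findGreatest (c · ≤ x) r = k ↔ x ∈ Set.Ico (c k) (c (k + 1)) := by
  rw [Nat.findGreatest_eq_iff, Set.mem_Ico]
  constructor
  · rintro ⟨-, hle, hgt⟩
    refine ⟨?_, ?_⟩
    · rcases k.eq_zero_or_pos with rfl | hk0
      · simp [h0]
      · exact hle hk0.ne'
    · rcases hk.lt_or_eq with hlt | rfl
      · exact not_le.1 (hgt (lt_add_one k) hlt)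
      · exact hx
  · rintro ⟨hle, hlt⟩
    exact ⟨hk, fun _ => hle, fun l hkl _ hl => absurd (hlt.trans_le (hc hkl)) (not_lt.2 hl)⟩

theorem exists_monotone_ncard_fibre_eq {n r : ℕ} (q : ℕ → ℕ)
    (hq : ∑ k ∈ range (r + 1), q k = n) :
    ∃ π : Fin n → ℕ, Monotone π ∧ (∀ x, π x < r + 1) ∧
      ∀ k < r + 1, {x | π x = k}.ncard = q k := by
  have hc : Monotone (bnd q) := fun a b hab => sum_le_sum_of_subset (range_subset_range.2 hab)
  have hx (x : Fin n) : (x : ℕ) < bnd q (r + 1) := hq ▸ x.isLt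
  refine ⟨fun x => Nat.findGreatest (bnd q · ≤ x) r,
    fun x y hxy => Nat.findGreatest_mono_left (fun k hk => hk.trans hxy) r,
    fun x => Nat.lt_succ_of_le (Nat.findGreatest_le r), fun k hk => ?_⟩
  have hfibre : {x : Fin n | Nat.findGreatest (bnd q · ≤ x) r = k} =
      {x : Fin n | (x : ℕ) ∈ Set.Ico (bnd q k) (bnd q (k + 1))} :=
    Set.ext fun x => findGreatest_eq_iff_mem_Ico hc (sum_range_zero q) (hx x) (by omega)
  rw [hfibre, ncard_setOf_val_mem_Ico (hq ▸ hc hk), bnd, bnd, sum_range_succ]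
  omega

theorem exists_partSizes {r i j t s : ℕ} (hi : i < r + 1) (hj : j < r + 1) (hij : i ≠ j)
    (hs : s < r) :
    ∃ q : ℕ → ℕ, q i = 1 ∧ q j = t ∧ (∀ k, q k ≤ t + 1) ∧
      ∑ k ∈ range (r + 1), q k = r * t + s + 1 := by
  have hi' : i ∈ range (r + 1) := mem_range.2 hi
  have hj' : j ∈ (range (r + 1)).erase i := mem_erase.2 ⟨hij.symm, mem_range.2 hj⟩
  have hcard : s ≤ #(((range (r + 1)).erase i).erase j) := by
    rw [card_erase_of_mem hj', card_erase_of_mem hi', card_range]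
    omega
  obtain ⟨A, hA, hAcard⟩ := exists_subset_card_eq hcard
  have hjA : j ∉ A := fun hjA => by simpa using hA hjA
  refine ⟨fun k => if k = i then 1 else t + if k ∈ A then 1 else 0, by simp,
    by simp [hij.symm, hjA], fun k => by dsimp only; split_ifs <;> omega, ?_⟩
  rw [← add_sum_erase _ _ hi', if_pos rfl,
    sum_congr rfl fun k hk => if_neg (ne_of_mem_erase hk), sum_add_distrib, sum_const,
    card_erase_of_mem hi', card_range, sum_boole, filter_mem_eq_inter,
    inter_eq_right.2 (hA.trans (erase_subset _ _)), hAcard]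
  simp only [smul_eq_mul, Nat.cast_id, add_tsub_cancel_right]
  ring

lemma deg_add_ncard_not_adj {n : ℕ} (G : SimpleGraph (Fin n)) (w : Fin n) :
    deg G w + {x | ¬ G.Adj w x}.ncard = n := by
  have := Set.ncard_add_ncard_compl {x | G.Adj w x}
  rwa [Nat.card_fin] at this

lemma sub_le_minDeg {n d : ℕ} {G : SimpleGraph (Fin n)} (hn : 0 < n)
    (hd : ∀ w, {x | ¬ G.Adj w x}.ncard ≤ d) : n - d ≤ minDeg G :=
  le_csInf ⟨_, ⟨⟨0, hn⟩, rfl⟩⟩ <| by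
    rintro _ ⟨w, rfl⟩
    have := deg_add_ncard_not_adj G w
    have := hd w
    omega

/-- The ordered complete multipartite graph whose parts are the fibres of `π`, with the edges
between parts `i` and `j` removed (by merging the two labels). -/
def barrierGraph {n : ℕ} (π : Fin n → ℕ) (i j : ℕ) : SimpleGraph (Fin n) :=
  (⊤ : SimpleGraph ℕ).comap fun x => if π x = i then j else π x

section BarrierGraph

variable {n i j : ℕ} {π : Fin n → ℕ}

lemma barrierGraph_adj {x y : Fin n} :
    (barrierGraph π i j).Adj x y ↔
      (if π x = i then j else π x) ≠ (if π y = i then j else π y) := by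
  simp [barrierGraph]

lemma sub_le_minDeg_barrierGraph {t : ℕ} (hn : 0 < n) (hi : {x | π x = i}.ncard ≤ 1)
    (hj : {x | π x = j}.ncard ≤ t) (ht : ∀ w, {x | π x = π w}.ncard ≤ t + 1) :
    n - (t + 1) ≤ minDeg (barrierGraph π i j) := by
  refine sub_le_minDeg hn fun w => ?_
  simp only [barrierGraph_adj, not_not]
  by_cases hw : (if π w = i then j else π w) = j
  · calc {x | (if π w = i then j else π w) = if π x = i then j else π x}.ncard
        ≤ ({x | π x = i} ∪ {x | π x = j}).ncard := by
          refine Set.ncard_le_ncard (fun x hx => ?_)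
          simp only [Set.mem_ofPred_eq, hw, Set.mem_union] at hx ⊢
          split_ifs at hx <;> tauto
      _ ≤ 1 + t := (Set.ncard_union_le _ _).trans (add_le_add hi hj)
      _ = t + 1 := add_comm 1 t
  · have hwi : π w ≠ i := fun h => hw (if_pos h)
    refine (Set.ncard_le_ncard (fun x hx => ?_)).trans (ht w)
    simp only [Set.mem_ofPred_eq, if_neg hwi] at hx hw ⊢
    split_ifs at hx <;> omega

theorem notMem_range_of_isCopy_barrierGraph {h r : ℕ} {H : SimpleGraph (Fin h)}
    (hH : LocalBarrierAt H r i j) (hπ : Monotone π) (hπr : ∀ x, π x < r + 1) {v : Fin n}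
    (hv : {x | π x = i} = {v}) {f : Fin h → Fin n} (hf : IsCopy H (barrierGraph π i j) f) :
    v ∉ Set.range f := by
  have hv' (x : Fin n) : π x = i ↔ x = v := Set.ext_iff.1 hv x
  refine notMem_range_of_localBarrierAt hH hπ hπr (fun x y hxy hπxy => ?_) hv'
    (fun x hx hvx => ?_) hf
  · rw [barrierGraph_adj, hπxy] at hxy
    exact hxy rfl
  · rw [barrierGraph_adj, if_pos ((hv' v).2 rfl), hx] at hvx
    split_ifs at hvx <;> simp_all

end BarrierGraph

lemma not_hasPerfectTiling_of_notMem_range {h n : ℕ} {H : SimpleGraph (Fin h)}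
    {G : SimpleGraph (Fin n)} {v : Fin n}
    (hv : ¬ ∃ f : Fin h → Fin n, IsCopy H G f ∧ v ∈ Set.range f) :
    ¬ HasPerfectTiling H G := by
  rintro ⟨S, hS, hcover⟩
  obtain ⟨f, ⟨hfS, hvf⟩, -⟩ := hcover v (Set.mem_univ v)
  exact hv ⟨f, (hS f hfS).1, hvf⟩

lemma one_sub_inv_mul_sub_one_lt {r t n : ℕ} (hr : 0 < r) (hrt : r * t < n) :
    (1 - 1 / (r : ℚ)) * n - 1 < (n - (t + 1) : ℕ) := by
  have htn : t + 1 ≤ n := by nlinarith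
  have hrt' : (t : ℚ) < n / r := by
    rw [lt_div_iff₀ (by exact_mod_cast hr)]
    exact_mod_cast (mul_comm t r).trans_lt hrt
  have hrhs : ((n - (t + 1) : ℕ) : ℚ) = n - t - 1 := by
    push_cast [Nat.cast_sub htn]
    ring
  rw [hrhs, sub_mul, one_mul, one_div, inv_mul_eq_div]
  linarith

theorem stmt1_general {h : ℕ} (H : SimpleGraph (Fin h)) (r : ℕ)
    (hbar : HasLocalBarrier H r) (n : ℕ) (hn : 0 < n) :
    ∃ i j, i < r + 1 ∧ j < r + 1 ∧ i ≠ j ∧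
      ∃ G : SimpleGraph (Fin n),
        (1 - 1 / (r : ℚ)) * n - 1 < (minDeg G : ℚ) ∧
        (∃ v : Fin n, ¬ ∃ f : Fin h → Fin n, IsCopy H G f ∧ v ∈ Set.range f) ∧
        ¬ (∀ v : Fin n, ∃ f : Fin h → Fin n, IsCopy H G f ∧ v ∈ Set.range f) ∧
        ¬ HasPerfectTiling H G := by
  obtain ⟨i, j, hi, hj, hij, hbarrier⟩ := hbar
  have hr : 0 < r := by omega
  have hdiv := Nat.div_add_mod (n - 1) r
  set t := (n - 1) / r
  have hrt : r * t < n := by omega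
  obtain ⟨q, hqi, hqj, hqt, hqsum⟩ := exists_partSizes (t := t) (s := (n - 1) % r) hi hj hij
    (Nat.mod_lt (n - 1) hr)
  obtain ⟨π, hπ, hπr, hfibre⟩ := exists_monotone_ncard_fibre_eq (n := n) q <|
    hqsum.trans (by omega)
  obtain ⟨v, hv⟩ := Set.ncard_eq_one.1 ((hfibre i hi).trans hqi)
  have hv_not_covered : ¬ ∃ f, IsCopy H (barrierGraph π i j) f ∧ v ∈ Set.range f :=
    fun ⟨f, hf, hvf⟩ => notMem_range_of_isCopy_barrierGraph hbarrier hπ hπr hv hf hvf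
  have hminDeg : n - (t + 1) ≤ minDeg (barrierGraph π i j) :=
    sub_le_minDeg_barrierGraph hn ((hfibre i hi).trans hqi).le ((hfibre j hj).trans hqj).le
      fun w => (hfibre _ (hπr w)).trans_le (hqt _)
  refine ⟨i, j, hi, hj, hij, barrierGraph π i j, ?_, ⟨v, hv_not_covered⟩,
    fun hcover => hv_not_covered (hcover v),
    not_hasPerfectTiling_of_notMem_range hv_not_covered⟩
  exact (one_sub_inv_mul_sub_one_lt hr hrt).trans_le (by exact_mod_cast hminDeg)

/-- If `H` has a local barrier then for every `n` there are `i ≠ j ∈ [r+1]` and an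
`n`-vertex ordered graph `G` with `δ(G) > (1 - 1/r)n - 1` in which some vertex lies in
no copy of `H`; in particular `G` has no `H`-cover and no perfect `H`-tiling. -/
theorem stmt1 {h : ℕ} (H : SimpleGraph (Fin h)) (r : ℕ) (hr : r = chiLt H)
    (hbar : HasLocalBarrier H r) (n : ℕ) (hn : 0 < n) :
    ∃ i j, i < r + 1 ∧ j < r + 1 ∧ i ≠ j ∧
      ∃ G : SimpleGraph (Fin n),
        (1 - 1 / (r : ℚ)) * n - 1 < (minDeg G : ℚ) ∧
        (∃ v : Fin n, ¬ ∃ f : Fin h → Fin n, IsCopy H G f ∧ v ∈ Set.range f) ∧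
        ¬ (∀ v : Fin n, ∃ f : Fin h → Fin n, IsCopy H G f ∧ v ∈ Set.range f) ∧
        ¬ HasPerfectTiling H G :=
  stmt1_general H r hbar n hn
end

section
/- Let H be an ordered graph on h vertices, r := χ_<(H), and suppose H has a local barrier with respect to indices i ≠ j ∈ [r+1]. Let F_1(n,r,i,j) be the n-vertex ordered graph consisting of classes U_1 < ⋯ < U_{r+1} where U_i = {u} is a singleton, the remaining classes are as equal as possible with |U_j| = ⌊(n-1)/r⌋, the graph minus u is complete r-partite on the remaining classes, and u is adjacent to all vertices outside U_j. Then no copy of H in F_1(n,r,i,j) covers the vertex u. -/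
open Finset

/-- No copy of `H` in the extremal graph `F₁(n,r,i,j)` covers the special vertex `u`.
Here the graph is described by boundaries `c` for `r+1` interval classes (0-indexed),
class `i` being the singleton `{u}`, all other classes as equal as possible with class
`j` of size `⌊(n-1)/r⌋`; two vertices other than `u` are adjacent iff they lie in
different classes, and `u` is adjacent exactly to the vertices outside class `j`. -/
theorem stmt2 {h n : ℕ} (H : SimpleGraph (Fin h)) (r : ℕ) (hr : r = chiLt H)
    (i j : ℕ) (hi : i < r + 1) (hj : j < r + 1) (hij : i ≠ j)
    (hbar : LocalBarrierAt H r i j)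
    (c : ℕ → ℕ) (hmono : Monotone c) (hc0 : c 0 = 0) (hcr : c (r + 1) = n)
    (hsing : c i + 1 = c (i + 1))
    (hsizes : ∀ k < r + 1, k ≠ i →
      c (k + 1) - c k = (n - 1) / r ∨ c (k + 1) - c k = (n - 1) / r + 1)
    (hjsize : c (j + 1) - c j = (n - 1) / r)
    (u : Fin n) (hu : (u : ℕ) = c i)
    (G : SimpleGraph (Fin n))
    (hadj : ∀ v w : Fin n, G.Adj v w ↔ v ≠ w ∧
      ((v = u ∧ ¬ (c j ≤ (w : ℕ) ∧ (w : ℕ) < c (j + 1))) ∨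
       (w = u ∧ ¬ (c j ≤ (v : ℕ) ∧ (v : ℕ) < c (j + 1))) ∨
       (v ≠ u ∧ w ≠ u ∧ ¬ SameClass c (v : ℕ) (w : ℕ)))) :
    ¬ ∃ f : Fin h → Fin n, IsCopy H G f ∧ u ∈ Set.range f := by
  rintro ⟨f, ⟨hfmono, hfhom⟩, x₀, hfx₀⟩
  have hfinj : Function.Injective f := hfmono.injective
  obtain ⟨b, hbdef⟩ : ∃ b : ℕ → ℕ,
      ∀ k, b k = (Finset.univ.filter (fun y : Fin h => (f y : ℕ) < c k)).card :=
    ⟨_, fun _ => rfl⟩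
  have hble : ∀ k, b k ≤ h := by
    intro k
    rw [hbdef]
    calc (Finset.univ.filter (fun y : Fin h => (f y : ℕ) < c k)).card
        ≤ (Finset.univ : Finset (Fin h)).card := Finset.card_le_card (Finset.filter_subset _ _)
      _ = h := by simp
  have key : ∀ k (x : Fin h), (x : ℕ) < b k ↔ (f x : ℕ) < c k := by
    intro k x
    rw [hbdef]
    constructor
    · intro hx
      by_contra hfx
      have hsub : (Finset.univ.filter (fun y : Fin h => (f y : ℕ) < c k)) ⊆ Finset.Iio x := by
        intro y hy
        simp only [Finset.mem_filter, Finset.mem_univ, true_and] at hy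
        rw [Finset.mem_Iio]
        by_contra hyx
        exact hfx (lt_of_le_of_lt (Fin.le_iff_val_le_val.mp
          (hfmono.monotone (le_of_not_gt hyx))) hy)
      have := Finset.card_le_card hsub
      rw [Fin.card_Iio] at this
      omega
    · intro hfx
      have hsub : Finset.Iic x ⊆ (Finset.univ.filter (fun y : Fin h => (f y : ℕ) < c k)) := by
        intro y hy
        rw [Finset.mem_Iic] at hy
        simp only [Finset.mem_filter, Finset.mem_univ, true_and]
        exact lt_of_le_of_lt (Fin.le_iff_val_le_val.mp (hfmono.monotone hy)) hfx
      have := Finset.card_le_card hsub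
      rw [Fin.card_Iic] at this
      omega
  -- build the interval colouring of H
  have hindep : ∀ k < r + 1, ∀ i' j' : Fin h,
      b k ≤ (i' : ℕ) → (i' : ℕ) < b (k + 1) → b k ≤ (j' : ℕ) → (j' : ℕ) < b (k + 1) →
      ¬ H.Adj i' j' := by
    intro k _ i' j' h1 h2 h3 h4 hadjH
    have hi1 : c k ≤ (f i' : ℕ) := le_of_not_gt (fun hc => by
      have := (key k i').mpr hc; omega)
    have hi2 : (f i' : ℕ) < c (k + 1) := (key (k+1) i').mp h2
    have hj1 : c k ≤ (f j' : ℕ) := le_of_not_gt (fun hc => by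
      have := (key k j').mpr hc; omega)
    have hj2 : (f j' : ℕ) < c (k + 1) := (key (k+1) j').mp h4
    have hG := hfhom _ _ hadjH
    rw [hadj] at hG
    obtain ⟨hne, hcase⟩ := hG
    have heqclass : ∀ {a b : Fin n}, (a : ℕ) = c i → c k ≤ (b : ℕ) → (b : ℕ) < c (k+1) →
        c k ≤ (a : ℕ) → (a : ℕ) < c (k+1) → a = b := by
      intro a bb ha hb1 hb2 ha1 ha2
      have hki : k = i := by
        by_contra hki
        rcases Nat.lt_or_ge k i with hlt | hge
        · have : c (k+1) ≤ c i := hmono hlt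
          omega
        · have hlt : i < k := lt_of_le_of_ne hge (fun e => hki e.symm)
          have : c (i+1) ≤ c k := hmono hlt
          omega
      subst hki
      have : (bb : ℕ) = c k := by omega
      exact Fin.ext (by omega)
    rcases hcase with ⟨hvu, _⟩ | ⟨hwu, _⟩ | ⟨_, _, hnsc⟩
    · exact hne (heqclass (hvu ▸ hu) hj1 hj2 hi1 hi2)
    · exact hne (heqclass (hwu ▸ hu) hi1 hi2 hj1 hj2).symm
    · apply hnsc
      intro m
      rcases Nat.lt_or_ge k m with hm | hm
      · have : c (k+1) ≤ c m := hmono hm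
        constructor <;> intro hcm <;> omega
      · have : c m ≤ c k := hmono hm
        constructor <;> intro _ <;> omega
  set C : IColouring H (r + 1) :=
    { b := b
      mono := fun a a' haa => by
        rw [hbdef, hbdef]
        refine Finset.card_le_card (by
          intro y hy
          simp only [Finset.mem_filter, Finset.mem_univ, true_and] at hy ⊢
          exact lt_of_lt_of_le hy (hmono haa))
      first := by
        rw [hbdef]
        simp only [hc0, Finset.card_eq_zero, Finset.filter_eq_empty_iff]
        intro y _; omega
      last := by
        rw [hbdef, hcr]
        rw [Finset.filter_true_of_mem (fun y _ => (f y).isLt), Finset.card_univ,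
          Fintype.card_fin]
      indep := hindep } with hCdef
  -- class i of the colouring is the singleton {x₀}
  have hbix : b i = (x₀ : ℕ) ∧ b (i+1) = (x₀ : ℕ) + 1 := by
    have h1 : ¬ ((x₀ : ℕ) < b i) := fun hc => by
      have := (key i x₀).mp hc; rw [hfx₀] at this; omega
    have h2 : (x₀ : ℕ) < b (i+1) := (key (i+1) x₀).mpr (by rw [hfx₀]; omega)
    have h3 : b (i+1) ≤ (x₀ : ℕ) + 1 := by
      rcases Nat.lt_or_ge ((x₀ : ℕ) + 1) h with hlt | hge
      · set y : Fin h := ⟨(x₀ : ℕ) + 1, hlt⟩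
        have hxy : x₀ < y := by simp [y, Fin.lt_iff_val_lt_val]
        have : (u : ℕ) < (f y : ℕ) := by rw [← hfx₀]; exact hfmono hxy
        have hny : ¬ ((y : ℕ) < b (i+1)) := fun hc => by
          have := (key (i+1) y).mp hc; omega
        simp only [y] at hny; omega
      · have := hble (i+1); omega
    have h4 : (x₀ : ℕ) ≤ b i := by
      rcases Nat.eq_zero_or_pos (x₀ : ℕ) with h0 | h0
      · omega
      · set y : Fin h := ⟨(x₀ : ℕ) - 1, by omega⟩
        have hxy : y < x₀ := by simp [y, Fin.lt_iff_val_lt_val]; omega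
        have : (f y : ℕ) < (u : ℕ) := by rw [← hfx₀]; exact hfmono hxy
        have : (y : ℕ) < b i := (key i y).mpr (by omega)
        simp only [y] at this; omega
    omega
  have hsing' : C.b i + 1 = C.b (i + 1) := by
    show b i + 1 = b (i+1); omega
  obtain ⟨v, w, hv, hw1, hw2, hvw⟩ := hbar C hsing'
  have hw1' : b j ≤ (w : ℕ) := hw1
  have hw2' : (w : ℕ) < b (j+1) := hw2
  have hv' : (v : ℕ) = b i := hv
  have hveq : v = x₀ := Fin.ext (by rw [hv']; exact hbix.1)
  have hfw1 : c j ≤ (f w : ℕ) := le_of_not_gt (fun hc => by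
    have := (key j w).mpr hc; omega)
  have hfw2 : (f w : ℕ) < c (j+1) := (key (j+1) w).mp hw2' 
  have hG := hfhom _ _ hvw
  rw [hveq, hfx₀, hadj] at hG
  obtain ⟨hne, hcase⟩ := hG
  rcases hcase with ⟨_, hnc⟩ | ⟨hwu, _⟩ | ⟨huu, _⟩
  · exact hnc ⟨hfw1, hfw2⟩
  · exact hne hwu.symm
  · exact huu rfl
end

section
/- Let ℓ ≥ 2 and let H be the complete 3-partite ordered graph with parts of sizes ℓ, 1, ℓ (so |H| = 2ℓ+1 and χ_<(H) = 3). Let n ∈ ℕ with n ≥ 20 and (2ℓ+1) | n, and let G be the complete 4-partite ordered graph on n vertices with parts G_1 < G_2 < G_3 < G_4 where |G_1| = |G_2| = |G_3| = ⌊nℓ²/(4ℓ²-1)⌋ + 1 and |G_4| = n - 3⌊nℓ²/(4ℓ²-1)⌋ - 3. Then δ(G) ≥ (1 - ℓ²/(4ℓ²-1))n - 1 but G contains no perfect H-tiling. -/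
open Finset

lemma my_adj_iff {n : ℕ} (c : ℕ → ℕ) (v w : Fin n) :
    (OrdMultiB n c).Adj v w ↔ ¬ SameClass c (v : ℕ) (w : ℕ) := by
  constructor
  · rintro ⟨hne, h | h⟩
    · exact h
    · exact fun hs => h (fun k => (hs k).symm)
  · intro h
    refine ⟨fun he => h (by subst he; exact fun k => Iff.rfl), Or.inl h⟩

lemma my_sameG {n m : ℕ} (h3 : 3 * m + 1 ≤ n) {v w : ℕ} (hv : v < 2 * m) (hw : w < 2 * m)
    (hmw : m ≤ v ↔ m ≤ w) :
    SameClass (fun k => if k ≤ 3 then k * m else n) v w := by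
  intro k
  rcases Nat.lt_or_ge k 4 with hk | hk
  · interval_cases k <;> simp <;> omega
  · have : ¬ (k ≤ 3) := by omega
    simp [this]
    omega

lemma my_initial {h : ℕ} (P : Fin h → Prop) [DecidablePred P]
    (hdc : ∀ i j : Fin h, i ≤ j → P j → P i) (i : Fin h) :
    P i ↔ (i : ℕ) < (univ.filter P).card := by
  constructor
  · intro hP
    have hsub : Finset.Iic i ⊆ univ.filter P := by
      intro j hj
      simp only [Finset.mem_Iic] at hj
      simp only [Finset.mem_filter, Finset.mem_univ, true_and]
      exact hdc j i hj hP
    have := Finset.card_le_card hsub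
    rw [Fin.card_Iic] at this
    omega
  · intro hi
    by_contra hP
    have hsub : univ.filter P ⊆ Finset.Iio i := by
      intro j hj
      simp only [Finset.mem_filter, Finset.mem_univ, true_and] at hj
      simp only [Finset.mem_Iio]
      by_contra hle
      exact hP (hdc i j (le_of_not_gt hle) hj)
    have := Finset.card_le_card hsub
    rw [Fin.card_Iio] at this
    omega

lemma my_card_lt {n K : ℕ} (hK : K ≤ n) :
    (univ.filter fun w : Fin n => (w : ℕ) < K).card = K := by
  rcases Nat.eq_or_lt_of_le hK with heq | hK'
  · have h1 : (univ.filter fun w : Fin n => (w : ℕ) < K) = univ := by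
      ext w; simpa using lt_of_lt_of_le w.isLt heq.ge
    rw [h1, Finset.card_univ, Fintype.card_fin, heq]
  · have : (univ.filter fun w : Fin n => (w : ℕ) < K) = Finset.Iio (⟨K, hK'⟩ : Fin n) := by
      ext w; simp [Fin.lt_def]
    rw [this, Fin.card_Iio]

lemma my_cover_sum {h n : ℕ} (S : Set (Fin h → Fin n))
    (hcover : ∀ v : Fin n, ∃! f, f ∈ S ∧ v ∈ Set.range f)
    (T : Finset (Fin n)) :
    T.card = ∑ f ∈ (Set.toFinite S).toFinset, (T ∩ Finset.univ.image f).card := by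
  classical
  have hdisj : ∀ f ∈ (Set.toFinite S).toFinset, ∀ g ∈ (Set.toFinite S).toFinset, f ≠ g →
      Disjoint (T ∩ Finset.univ.image f) (T ∩ Finset.univ.image g) := by
    intro f hf g hg hne
    rw [Finset.disjoint_left]
    intro a haf hag
    simp only [Finset.mem_inter, Finset.mem_image, Finset.mem_univ, true_and] at haf hag
    rw [Set.Finite.mem_toFinset] at hf hg
    obtain ⟨u, -, hu⟩ := hcover a
    have h1 : f = u := hu f ⟨hf, by obtain ⟨i, hi⟩ := haf.2; exact ⟨i, hi⟩⟩
    have h2 : g = u := hu g ⟨hg, by obtain ⟨i, hi⟩ := hag.2; exact ⟨i, hi⟩⟩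
    exact hne (h1.trans h2.symm)
  have hT : T = (Set.toFinite S).toFinset.biUnion (fun f => T ∩ Finset.univ.image f) := by
    ext a
    simp only [Finset.mem_biUnion, Finset.mem_inter, Finset.mem_image, Finset.mem_univ,
      true_and, Set.Finite.mem_toFinset]
    constructor
    · intro ha
      obtain ⟨f, ⟨hfS, i, hi⟩, -⟩ := hcover a
      exact ⟨f, hfS, ha, i, hi⟩
    · rintro ⟨f, -, ha, -⟩
      exact ha
  conv_lhs => rw [hT]
  rw [Finset.card_biUnion hdisj]

lemma my_inter_image {h n : ℕ} (f : Fin h → Fin n) (hf : Function.Injective f)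
    (p : Fin n → Prop) [DecidablePred p] :
    ((Finset.univ.filter p) ∩ Finset.univ.image f).card
      = (Finset.univ.filter fun i => p (f i)).card := by
  classical
  have h1 : (Finset.univ.filter p) ∩ Finset.univ.image f
      = (Finset.univ.filter fun i => p (f i)).image f := by
    ext v
    simp only [Finset.mem_inter, Finset.mem_filter, Finset.mem_image, Finset.mem_univ, true_and]
    constructor
    · rintro ⟨hp, i, rfl⟩; exact ⟨i, hp, rfl⟩
    · rintro ⟨i, hp, rfl⟩; exact ⟨hp, i, rfl⟩
  rw [h1, Finset.card_image_of_injective _ hf]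

lemma my_key {l n m : ℕ} (hl : 2 ≤ l) (h3 : 3 * m + 1 ≤ n)
    (f : Fin (2 * l + 1) → Fin n) (hmono : StrictMono f)
    (hadj : ∀ i j, (OrdMultiB (2 * l + 1)
        (fun k => if k = 0 then 0 else if k = 1 then l else if k = 2 then l + 1
          else 2 * l + 1)).Adj i j →
      (OrdMultiB n (fun k => if k ≤ 3 then k * m else n)).Adj (f i) (f j)) :
    (univ.filter fun i => (f i : ℕ) < 2 * m).card ≤ l + 1 ∧
    ((univ.filter fun i => (f i : ℕ) < 2 * m).card = l + 1 →
      (univ.filter fun i => (f i : ℕ) < m).card = l) := by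
  classical
  set cH : ℕ → ℕ := fun k => if k = 0 then 0 else if k = 1 then l else if k = 2 then l + 1
          else 2 * l + 1 with hcH
  set s := (univ.filter fun i => (f i : ℕ) < 2 * m).card with hs
  set g := (univ.filter fun i => (f i : ℕ) < m).card with hg
  have hdc : ∀ K : ℕ, ∀ i j : Fin (2 * l + 1), i ≤ j → (f j : ℕ) < K → (f i : ℕ) < K := by
    intro K i j hij hjK
    have : f i ≤ f j := hmono.monotone hij
    exact lt_of_le_of_lt this hjK
  have hiff2 : ∀ i : Fin (2 * l + 1), (f i : ℕ) < 2 * m ↔ (i : ℕ) < s :=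
    my_initial _ (hdc (2 * m))
  have hiff1 : ∀ i : Fin (2 * l + 1), (f i : ℕ) < m ↔ (i : ℕ) < g :=
    my_initial _ (hdc m)
  have hB : ∀ i j : Fin (2 * l + 1), (f i : ℕ) < 2 * m → (f j : ℕ) < 2 * m →
      ¬ SameClass cH (i : ℕ) (j : ℕ) → ¬ ((m ≤ (f i : ℕ)) ↔ (m ≤ (f j : ℕ))) := by
    intro i j h1 h2 hns hiff
    exact (my_adj_iff _ _ _).mp (hadj i j ((my_adj_iff _ _ _).mpr hns)) (my_sameG h3 h1 h2 hiff)
  -- non-sameness facts in H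
  have ns1 : ∀ i j : Fin (2 * l + 1), (i : ℕ) < l → (j : ℕ) = l →
      ¬ SameClass cH (i : ℕ) (j : ℕ) := by
    intro i j hi hj hsame
    have := hsame 1
    simp only [hcH] at this
    norm_num at this
    omega
  have ns2 : ∀ i j : Fin (2 * l + 1), (i : ℕ) ≤ l → (j : ℕ) = l + 1 →
      ¬ SameClass cH (i : ℕ) (j : ℕ) := by
    intro i j hi hj hsame
    have := hsame 2
    simp only [hcH] at this
    norm_num at this
    omega
  have i0 : Fin (2 * l + 1) := ⟨0, by omega⟩
  constructor
  · by_contra hcon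
    push_neg at hcon
    set i0 : Fin (2 * l + 1) := ⟨0, by omega⟩
    set il : Fin (2 * l + 1) := ⟨l, by omega⟩
    set il1 : Fin (2 * l + 1) := ⟨l + 1, by omega⟩
    have v0 : (f i0 : ℕ) < 2 * m := (hiff2 i0).mpr (by simp [i0]; omega)
    have vl : (f il : ℕ) < 2 * m := (hiff2 il).mpr (by simp [il]; omega)
    have vl1 : (f il1 : ℕ) < 2 * m := (hiff2 il1).mpr (by simp [il1]; omega)
    have n1 : ¬ ((m ≤ (f i0 : ℕ)) ↔ (m ≤ (f il : ℕ))) :=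
      hB _ _ v0 vl (ns1 i0 il (by simp [i0]; omega) (by simp [il]))
    have n2 : ¬ ((m ≤ (f i0 : ℕ)) ↔ (m ≤ (f il1 : ℕ))) :=
      hB _ _ v0 vl1 (ns2 i0 il1 (by simp [i0]) (by simp [il1]))
    have n3 : ¬ ((m ≤ (f il : ℕ)) ↔ (m ≤ (f il1 : ℕ))) :=
      hB _ _ vl vl1 (ns2 il il1 (by simp [il]) (by simp [il1]))
    tauto
  · intro hseq
    set il : Fin (2 * l + 1) := ⟨l, by omega⟩
    have vl : (f il : ℕ) < 2 * m := (hiff2 il).mpr (by simp [il]; omega)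
    have hnsi : ∀ i : Fin (2 * l + 1), (i : ℕ) < l →
        ¬ ((m ≤ (f i : ℕ)) ↔ (m ≤ (f il : ℕ))) := by
      intro i hi
      have vi : (f i : ℕ) < 2 * m := (hiff2 i).mpr (by omega)
      exact hB _ _ vi vl (ns1 i il hi (by simp [il]))
    set i0 : Fin (2 * l + 1) := ⟨0, by omega⟩
    have hf0 : (f i0 : ℕ) < m := by
      by_contra hge
      push_neg at hge
      have : (f i0 : ℕ) ≤ (f il : ℕ) := hmono.monotone (by simp [Fin.le_def, i0, il])
      exact hnsi i0 (by simp [i0]; omega) ⟨fun _ => by omega, fun _ => hge⟩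
    have hml : m ≤ (f il : ℕ) := by
      by_contra hlt
      push_neg at hlt
      exact hnsi i0 (by simp [i0]; omega) ⟨fun h => by omega, fun h => by omega⟩
    have hlow : ∀ i : Fin (2 * l + 1), (i : ℕ) < l → (f i : ℕ) < m := by
      intro i hi
      by_contra hge
      push_neg at hge
      exact hnsi i hi ⟨fun _ => hml, fun _ => hge⟩
    have hge : l ≤ g := by
      have h1 : (l - 1 : ℕ) < g := by
        have := (hiff1 ⟨l - 1, by omega⟩).mp (hlow ⟨l - 1, by omega⟩ (by simp; omega))
        simpa using this
      omega
    have hle : g ≤ l := by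
      by_contra hgt
      push_neg at hgt
      have := (hiff1 il).mpr (by simp [il]; omega)
      omega
    omega

lemma my_deg {n m : ℕ} (h3 : 3 * m + 1 ≤ n) (h4 : n + 1 ≤ 4 * m) (v : Fin n) :
    n - m ≤ deg (OrdMultiB n (fun k => if k ≤ 3 then k * m else n)) v := by
  classical
  set c : ℕ → ℕ := fun k => if k ≤ 3 then k * m else n with hc
  obtain ⟨lo, hlo⟩ : ∃ lo : ℕ, ∀ w : Fin n, SameClass c (v : ℕ) (w : ℕ) →
      lo ≤ (w : ℕ) ∧ (w : ℕ) < lo + m := by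
    have hc1 : c 1 = m := by norm_num [hc]
    have hc2 : c 2 = 2 * m := by norm_num [hc]
    have hc3 : c 3 = 3 * m := by norm_num [hc]
    rcases Nat.lt_or_ge (v : ℕ) m with h | h
    · exact ⟨0, fun w hw => by have := hw 1; rw [hc1] at this; omega⟩
    rcases Nat.lt_or_ge (v : ℕ) (2 * m) with h2 | h2
    · refine ⟨m, fun w hw => ?_⟩
      have e1 := hw 1; have e2 := hw 2
      rw [hc1] at e1; rw [hc2] at e2; omega
    rcases Nat.lt_or_ge (v : ℕ) (3 * m) with h3' | h3'
    · refine ⟨2 * m, fun w hw => ?_⟩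
      have e2 := hw 2; have e3 := hw 3
      rw [hc2] at e2; rw [hc3] at e3; omega
    · refine ⟨3 * m, fun w hw => ?_⟩
      have e3 := hw 3
      rw [hc3] at e3
      have := w.isLt
      omega
  have hsub : {w : Fin n | SameClass c (v : ℕ) (w : ℕ)} ⊆
      {w : Fin n | lo ≤ (w : ℕ) ∧ (w : ℕ) < lo + m} := fun w hw => hlo w hw
  have hIcard : {w : Fin n | lo ≤ (w : ℕ) ∧ (w : ℕ) < lo + m}.ncard ≤ m := by
    have heq : {w : Fin n | lo ≤ (w : ℕ) ∧ (w : ℕ) < lo + m} =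
        ↑(univ.filter fun w : Fin n => lo ≤ (w : ℕ) ∧ (w : ℕ) < lo + m) := by
      ext w; simp
    rw [heq, Set.ncard_coe_finset]
    have h1 : ∀ w ∈ univ.filter (fun w : Fin n => lo ≤ (w : ℕ) ∧ (w : ℕ) < lo + m),
        (w : ℕ) - lo ∈ Finset.range m := by
      intro w hw; simp only [Finset.mem_filter] at hw; simp only [Finset.mem_range]; omega
    have h2 : Set.InjOn (fun w : Fin n => (w : ℕ) - lo)
        ↑(univ.filter (fun w : Fin n => lo ≤ (w : ℕ) ∧ (w : ℕ) < lo + m)) := by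
      intro a ha b hb hab
      simp only [Finset.coe_filter, Set.mem_setOf_eq, Finset.mem_univ, true_and] at ha hb
      simp only at hab
      exact Fin.val_injective (by omega)
    have := Finset.card_le_card_of_injOn _ h1 h2
    simpa using this
  have hSame : {w : Fin n | SameClass c (v : ℕ) (w : ℕ)}.ncard ≤ m :=
    le_trans (Set.ncard_le_ncard hsub (Set.toFinite _)) hIcard
  have hAdjset : {w : Fin n | (OrdMultiB n c).Adj v w} =
      {w : Fin n | SameClass c (v : ℕ) (w : ℕ)}ᶜ := by
    ext w
    simp only [Set.mem_setOf_eq, Set.mem_compl_iff, my_adj_iff]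
  have hcompl := Set.ncard_add_ncard_compl {w : Fin n | SameClass c (v : ℕ) (w : ℕ)}
  rw [Nat.card_eq_fintype_card, Fintype.card_fin] at hcompl
  rw [deg, hAdjset]
  omega

/-- Let `H` be the complete 3-partite ordered graph with parts of sizes `ℓ, 1, ℓ` and let
`G` be the complete 4-partite ordered graph on `n` vertices whose first three parts have
size `m = ⌊nℓ²/(4ℓ²-1)⌋ + 1` and whose last part has size `n - 3m`. Then
`δ(G) ≥ (1 - ℓ²/(4ℓ²-1))n - 1` but `G` has no perfect `H`-tiling. -/
theorem stmt9 (l : ℕ) (hl : 2 ≤ l) (n : ℕ) (hn : 20 ≤ n) (hdvd : (2 * l + 1) ∣ n)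
    (m : ℕ) (hm : m = n * l ^ 2 / (4 * l ^ 2 - 1) + 1) :
    (1 - (l : ℚ) ^ 2 / (4 * (l : ℚ) ^ 2 - 1)) * n - 1 ≤
      (minDeg (OrdMultiB n (fun k => if k ≤ 3 then k * m else n)) : ℚ) ∧
    ¬ HasPerfectTiling
      (OrdMultiB (2 * l + 1)
        (fun k => if k = 0 then 0 else if k = 1 then l else if k = 2 then l + 1
          else 2 * l + 1))
      (OrdMultiB n (fun k => if k ≤ 3 then k * m else n)) := by
  classical
  have hll : 4 ≤ l ^ 2 := by nlinarith
  set X : ℕ := 4 * l ^ 2 - 1 with hXdef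
  have hE1 : X + 1 = 4 * l ^ 2 := Nat.sub_add_cancel (by omega)
  have hX0 : 0 < X := by omega
  set q : ℕ := n * l ^ 2 / X with hqdef
  have hq1 : q * X ≤ n * l ^ 2 := Nat.div_mul_le_self _ _
  have hq2 : n * l ^ 2 < m * X := by
    have h1 : X * q + n * l ^ 2 % X = n * l ^ 2 := Nat.div_add_mod _ _
    have h2 : n * l ^ 2 % X < X := Nat.mod_lt _ hX0
    calc n * l ^ 2 = X * q + n * l ^ 2 % X := h1.symm
      _ < X * q + X := Nat.add_lt_add_left h2 _
      _ = m * X := by rw [hm]; ring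
  have hkey1 : 16 * l ^ 2 + n ≤ n * l ^ 2 + 4 := by
    zify
    have h1 : (4 : ℤ) ≤ (l : ℤ) ^ 2 := by exact_mod_cast hll
    have h2 : (20 : ℤ) ≤ (n : ℤ) := by exact_mod_cast hn
    nlinarith [mul_nonneg (sub_nonneg.2 h2) (sub_nonneg.2 h1)]
  have h3m : 3 * m + 1 ≤ n := by
    have e2 : n * X + n = n * (4 * l ^ 2) := by rw [← hE1]; ring
    have hmul : (3 * q + 4) * X ≤ n * X := by nlinarith [hq1, hkey1, e2]
    have := Nat.le_of_mul_le_mul_right hmul hX0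
    omega
  have h4m : n + 1 ≤ 4 * m := by
    have e1 : n * l ^ 2 / (4 * l ^ 2) ≤ q := Nat.div_le_div_left (by omega) hX0
    have e2 : n * l ^ 2 / (4 * l ^ 2) = n / 4 := by
      rw [Nat.mul_div_mul_right _ _ (by positivity : 0 < l ^ 2)]
    omega
  have hm1 : 1 ≤ m := by omega
  have hmn : m ≤ n := by omega
  constructor
  · -- minimum degree bound
    have hmin : n - m ≤ minDeg (OrdMultiB n (fun k => if k ≤ 3 then k * m else n)) := by
      apply le_csInf
      · exact ⟨deg (OrdMultiB n (fun k => if k ≤ 3 then k * m else n)) ⟨0, by omega⟩,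
          Set.mem_range_self _⟩
      · rintro b ⟨v, rfl⟩
        exact my_deg h3m h4m v
    have hcast : ((n - m : ℕ) : ℚ) = (n : ℚ) - m := Nat.cast_sub hmn
    have hlq : (2 : ℚ) ≤ (l : ℚ) := by exact_mod_cast hl
    have hDq : (0 : ℚ) < 4 * (l : ℚ) ^ 2 - 1 := by nlinarith
    have hXq : (X : ℚ) = 4 * (l : ℚ) ^ 2 - 1 := by
      have h := congrArg (fun t : ℕ => (t : ℚ)) hE1
      push_cast at h
      linarith
    have hq1' : (q : ℚ) * (4 * (l : ℚ) ^ 2 - 1) ≤ (n : ℚ) * (l : ℚ) ^ 2 := by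
      rw [← hXq]
      exact_mod_cast hq1
    have hqle : (q : ℚ) ≤ (n : ℚ) * (l : ℚ) ^ 2 / (4 * (l : ℚ) ^ 2 - 1) :=
      (le_div_iff₀ hDq).2 hq1'
    have hmq : (m : ℚ) = (q : ℚ) + 1 := by exact_mod_cast hm
    have hexp : (1 - (l : ℚ) ^ 2 / (4 * (l : ℚ) ^ 2 - 1)) * n
        = (n : ℚ) - (n : ℚ) * (l : ℚ) ^ 2 / (4 * (l : ℚ) ^ 2 - 1) := by
      field_simp
    have hfin : (1 - (l : ℚ) ^ 2 / (4 * (l : ℚ) ^ 2 - 1)) * n - 1 ≤ ((n - m : ℕ) : ℚ) := by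
      rw [hcast, hexp]
      linarith
    have hlast : ((n - m : ℕ) : ℚ) ≤
        (minDeg (OrdMultiB n (fun k => if k ≤ 3 then k * m else n)) : ℚ) := by
      exact_mod_cast hmin
    linarith
  · -- no perfect tiling
    rintro ⟨S, hcopy, hcover⟩
    have hcov : ∀ v : Fin n, ∃! f, f ∈ S ∧ v ∈ Set.range f :=
      fun v => hcover v (Set.mem_univ v)
    set 𝒮 := (Set.toFinite S).toFinset with h𝒮
    have hmem : ∀ f, f ∈ 𝒮 ↔ f ∈ S := fun f => Set.Finite.mem_toFinset _
    set sF : (Fin (2 * l + 1) → Fin n) → ℕ :=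
      fun f => (univ.filter fun i => (f i : ℕ) < 2 * m).card with hsF
    set gF : (Fin (2 * l + 1) → Fin n) → ℕ :=
      fun f => (univ.filter fun i => (f i : ℕ) < m).card with hgF
    have hprops : ∀ f ∈ 𝒮, StrictMono f ∧ sF f ≤ l + 1 ∧ (sF f = l + 1 → gF f = l) := by
      intro f hf
      obtain ⟨⟨hmono, hadj⟩, -⟩ := hcopy f ((hmem f).1 hf)
      exact ⟨hmono, my_key hl h3m f hmono hadj⟩
    -- total count : |𝒮| * (2l+1) = n
    have hNn : 𝒮.card * (2 * l + 1) = n := by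
      have h1 := my_cover_sum S hcov (univ.filter fun w : Fin n => (w : ℕ) < n)
      rw [my_card_lt (le_refl n)] at h1
      have h2 : ∀ f ∈ 𝒮, ((univ.filter fun w : Fin n => (w : ℕ) < n) ∩ univ.image f).card
          = 2 * l + 1 := by
        intro f hf
        rw [my_inter_image f ((hprops f hf).1).injective]
        have heq : (univ.filter fun i : Fin (2 * l + 1) => ((f i : ℕ) < n)) = univ := by
          ext i; simp [(f i).isLt]
        rw [heq, Finset.card_univ, Fintype.card_fin]
      rw [Finset.sum_congr rfl h2, Finset.sum_const, smul_eq_mul] at h1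
      exact h1.symm
    -- counting in [0, 2m) and [0, m)
    have hsum2 : (∑ f ∈ 𝒮, sF f) = 2 * m := by
      have h1 := my_cover_sum S hcov (univ.filter fun w : Fin n => (w : ℕ) < 2 * m)
      rw [my_card_lt (show 2 * m ≤ n by omega)] at h1
      exact (h1.trans (Finset.sum_congr rfl fun f hf =>
        my_inter_image f ((hprops f hf).1).injective _)).symm
    have hsum1 : (∑ f ∈ 𝒮, gF f) = m := by
      have h1 := my_cover_sum S hcov (univ.filter fun w : Fin n => (w : ℕ) < m)
      rw [my_card_lt (show m ≤ n by omega)] at h1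
      exact (h1.trans (Finset.sum_congr rfl fun f hf =>
        my_inter_image f ((hprops f hf).1).injective _)).symm
    -- the special copies
    have hcardsplit := Finset.card_filter_add_card_filter_not (s := 𝒮)
      (p := fun f => sF f = l + 1)
    have hγ : 2 * m ≤ 𝒮.card * l + (𝒮.filter (fun f => sF f = l + 1)).card := by
      have b1 : ∑ f ∈ 𝒮.filter (fun f => sF f = l + 1), sF f
          ≤ (𝒮.filter (fun f => sF f = l + 1)).card * (l + 1) := by
        calc ∑ f ∈ 𝒮.filter (fun f => sF f = l + 1), sF f
            ≤ ∑ _f ∈ 𝒮.filter (fun f => sF f = l + 1), (l + 1) :=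
              Finset.sum_le_sum (fun f hf => le_of_eq (Finset.mem_filter.1 hf).2)
          _ = (𝒮.filter (fun f => sF f = l + 1)).card * (l + 1) := by
              rw [Finset.sum_const, smul_eq_mul]
      have b2 : ∑ f ∈ 𝒮.filter (fun f => ¬ (sF f = l + 1)), sF f
          ≤ (𝒮.filter (fun f => ¬ (sF f = l + 1))).card * l := by
        calc ∑ f ∈ 𝒮.filter (fun f => ¬ (sF f = l + 1)), sF f
            ≤ ∑ _f ∈ 𝒮.filter (fun f => ¬ (sF f = l + 1)), l := by
              apply Finset.sum_le_sum
              intro f hf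
              have h1 := Finset.mem_filter.1 hf
              have h2 := (hprops f h1.1).2.1
              omega
          _ = (𝒮.filter (fun f => ¬ (sF f = l + 1))).card * l := by
              rw [Finset.sum_const, smul_eq_mul]
      have hsplit : ∑ f ∈ 𝒮, sF f
          = ∑ f ∈ 𝒮.filter (fun f => sF f = l + 1), sF f
            + ∑ f ∈ 𝒮.filter (fun f => ¬ (sF f = l + 1)), sF f :=
        (Finset.sum_filter_add_sum_filter_not 𝒮 _ _).symm
      have hfin : (𝒮.filter (fun f => sF f = l + 1)).card * (l + 1)
          + (𝒮.filter (fun f => ¬ (sF f = l + 1))).card * l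
          = 𝒮.card * l + (𝒮.filter (fun f => sF f = l + 1)).card := by
        have e : ((𝒮.filter (fun f => sF f = l + 1)).card
            + (𝒮.filter (fun f => ¬ (sF f = l + 1))).card) * l
            + (𝒮.filter (fun f => sF f = l + 1)).card
            = (𝒮.filter (fun f => sF f = l + 1)).card * (l + 1)
            + (𝒮.filter (fun f => ¬ (sF f = l + 1))).card * l := by ring
        rw [hcardsplit] at e
        omega
      omega
    -- the G₁ bound
    have hδ : (𝒮.filter (fun f => sF f = l + 1)).card * l ≤ m := by
      calc (𝒮.filter (fun f => sF f = l + 1)).card * l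
          = ∑ _f ∈ 𝒮.filter (fun f => sF f = l + 1), l := by
            rw [Finset.sum_const, smul_eq_mul]
        _ = ∑ f ∈ 𝒮.filter (fun f => sF f = l + 1), gF f := by
            refine Finset.sum_congr rfl fun f hf => ?_
            have h1 := Finset.mem_filter.1 hf
            exact ((hprops f h1.1).2.2 h1.2).symm
        _ ≤ ∑ f ∈ 𝒮, gF f := Finset.sum_le_sum_of_subset (Finset.filter_subset _ _)
        _ = m := hsum1
    -- final arithmetic contradiction
    have hq2' : n * l ^ 2 + 1 + m ≤ m * (4 * l ^ 2) := by
      have e : m * X + m = m * (4 * l ^ 2) := by rw [← hE1]; ring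
      omega
    set N := 𝒮.card
    set a := (𝒮.filter (fun f => sF f = l + 1)).card
    have hγ' : (2 : ℤ) * m ≤ N * l + a := by exact_mod_cast hγ
    have hδ' : (a : ℤ) * l ≤ m := by exact_mod_cast hδ
    have hNn' : (N : ℤ) * (2 * l + 1) = n := by exact_mod_cast hNn
    have hq2'' : (n : ℤ) * l ^ 2 + 1 + m ≤ m * (4 * l ^ 2) := by exact_mod_cast hq2'
    have hl' : (2 : ℤ) ≤ l := by exact_mod_cast hl
    have e1 : (2 : ℤ) * m * (l * (2 * l + 1)) ≤ (N * l + a) * (l * (2 * l + 1)) :=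
      mul_le_mul_of_nonneg_right hγ' (by positivity)
    have e2 : (a : ℤ) * l * (2 * l + 1) ≤ m * (2 * l + 1) :=
      mul_le_mul_of_nonneg_right hδ' (by positivity)
    have e3 : (N : ℤ) * (2 * l + 1) * l ^ 2 = n * l ^ 2 := by rw [hNn']
    linarith [e1, e2, e3, hq2'']
end

section
/- Let r, k ≥ 2 and let H be the ordered graph on [(r-1)k+1] with edges {((s-1)k+1, sk+1) : s ∈ [r-1]}. Then H does not have a local barrier: for every pair i ≠ j ∈ [r+1] there is an interval (r+1)-colouring V_1 < ⋯ < V_{r+1} of H with V_i a singleton {v} and no edge between v and V_j. -/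
open Finset

/-- The ordered graph on `[(r-1)k+1]` (0-indexed: `Fin ((r-1)k+1)`) whose edges are
exactly the pairs `{ak, (a+1)k}` for `a < r-1`, i.e. the ordered path on the vertices
`0, k, 2k, …, (r-1)k`. -/
def pathGraph (r k : ℕ) : SimpleGraph (Fin ((r - 1) * k + 1)) :=
  SimpleGraph.fromRel (fun v w => ∃ a, a < r - 1 ∧ (v : ℕ) = a * k ∧ (w : ℕ) = (a + 1) * k)


lemma pg_adj_facts (r k : ℕ) {u w : Fin ((r-1)*k+1)} (h : (pathGraph r k).Adj u w) :
    k ∣ (u:ℕ) ∧ ((w:ℕ) = (u:ℕ) + k ∨ (u:ℕ) = (w:ℕ) + k) := by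
  simp only [pathGraph, SimpleGraph.fromRel_adj] at h
  obtain ⟨hne, h | h⟩ := h
  · obtain ⟨a, _, hu, hw⟩ := h
    have e : (a+1)*k = a*k + k := by ring
    constructor
    · exact hu ▸ dvd_mul_left k a
    · omega
  · obtain ⟨a, _, hw, hu⟩ := h
    have e : (a+1)*k = a*k + k := by ring
    constructor
    · exact hu ▸ dvd_mul_left k (a+1)
    · omega

lemma pg_indep (r k : ℕ) (B : ℕ → ℕ) (hs : ∀ t, B (t+1) ≤ B t + k) :
    ∀ m < r + 1, ∀ u w : Fin ((r-1)*k+1),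
      B m ≤ (u:ℕ) → (u:ℕ) < B (m+1) → B m ≤ (w:ℕ) → (w:ℕ) < B (m+1) →
      ¬ (pathGraph r k).Adj u w := by
  intro m _ u w h1 h2 h3 h4 hadj
  have hd := (pg_adj_facts r k hadj).2
  have := hs m
  omega

/-- The ordered path `pathGraph r k` has no local barrier: for every `i ≠ j` among the
`r+1` classes there is an interval `(r+1)`-colouring whose `i`-th class is a singleton
`{v}` with no edge between `v` and the `j`-th class. -/
theorem stmt11 (r k : ℕ) (hr : 2 ≤ r) (hk : 2 ≤ k) :
    ∀ i j, i < r + 1 → j < r + 1 → i ≠ j →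
      ∃ C : IColouring (pathGraph r k) (r + 1),
        C.b i + 1 = C.b (i + 1) ∧
        ∀ v w : Fin ((r - 1) * k + 1), (v : ℕ) = C.b i →
          C.b j ≤ (w : ℕ) → (w : ℕ) < C.b (j + 1) → ¬ (pathGraph r k).Adj v w := by
  intro i j hi hj hne
  have hk0 : 0 < k := by omega
  rcases eq_or_ne i 0 with rfl | hi0
  · -- i = 0 : singleton class is {0}; its only neighbour is k
    rcases eq_or_ne j 1 with rfl | hj1
    · -- make class 1 empty
      set B : ℕ → ℕ := fun t => if t = 0 then 0 else if t = 1 then 1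
        else min (1+(t-2)*k) ((r-1)*k+1) with hB
      have key : ∀ t, B t ≤ B (t+1) ∧ B (t+1) ≤ B t + k := by
        intro t
        have f1 : t ≥ 2 → (t+1-2)*k = (t-2)*k + k := by
          intro h
          have e : t+1-2 = (t-2)+1 := by omega
          rw [e, add_mul, one_mul]
        have f2 : t = 1 → (t+1-2)*k = 0 := by
          intro h; subst h; norm_num
        simp only [hB]
        split_ifs <;> (try exact ‹False›.elim) <;> omega
      refine ⟨⟨B, monotone_nat_of_le_succ (fun t => (key t).1), ?_, ?_,
        pg_indep r k B (fun t => (key t).2)⟩, ?_, ?_⟩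
      · simp [hB]
      · have f3 : (r+1-2)*k = (r-1)*k := by congr 1 <;> omega
        simp only [hB]; split_ifs <;> (try exact ‹False›.elim) <;> omega
      · simp [hB]
      · intro v w hv hw1 hw2 _
        have f : (1+1-2)*k = 0 := by norm_num
        simp only [hB] at hw1 hw2
        split_ifs at hw1 hw2 <;> (try exact ‹False›.elim) <;> omega
    · -- j ≥ 2 : class j starts above k
      set B : ℕ → ℕ := fun t => if t = 0 then 0
        else min (1+(t-1)*k) ((r-1)*k+1) with hB
      have key : ∀ t, B t ≤ B (t+1) ∧ B (t+1) ≤ B t + k := by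
        intro t
        have f1 : t ≥ 1 → (t+1-1)*k = (t-1)*k + k := by
          intro h
          have e : t+1-1 = (t-1)+1 := by omega
          rw [e, add_mul, one_mul]
        have f2 : t = 0 → (t+1-1)*k = 0 := by
          intro h; subst h; norm_num
        simp only [hB]
        split_ifs <;> (try exact ‹False›.elim) <;> omega
      refine ⟨⟨B, monotone_nat_of_le_succ (fun t => (key t).1), ?_, ?_,
        pg_indep r k B (fun t => (key t).2)⟩, ?_, ?_⟩
      · simp [hB]
      · have f3 : (r+1-1)*k = r*k := by congr 1 <;> omega
        have f4 : (r-1)*k ≤ r*k := Nat.mul_le_mul (by omega) le_rfl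
        simp only [hB]; split_ifs <;> (try exact ‹False›.elim) <;> omega
      · have f : (1-1)*k = 0 := by norm_num
        simp only [hB]; split_ifs <;> (try exact ‹False›.elim) <;> omega
      · intro v w hv hw1 hw2 hadj
        have hd := (pg_adj_facts r k hadj).2
        have hv0 : (v:ℕ) = 0 := by
          simp only [hB] at hv; split_ifs at hv <;> (try exact ‹False›.elim) <;> omega
        have f5 : 1*k ≤ (j-1)*k := Nat.mul_le_mul (by omega) le_rfl
        have f6 : 1*k ≤ (r-1)*k := Nat.mul_le_mul (by omega) le_rfl
        have f7 : 1*k = k := one_mul k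
        simp only [hB] at hw1
        split_ifs at hw1 <;> (try exact ‹False›.elim) <;> omega
  · rcases eq_or_ne i r with hir | hir
    · -- i = r : singleton class is {(r-1)k}; its only neighbour is (r-2)k
      obtain rfl := hir.symm
      have e1 : (r-2)*k + k = (r-1)*k := by
        have h : r-2+1 = r-1 := by omega
        rw [← h]; ring
      rcases eq_or_ne j (r-2) with rfl | hj2
      · -- j = r-2 : shift so that (r-2)k lies in class r-1
        set B : ℕ → ℕ := fun t => if t = 0 then 0 else if t ≤ r
          then min ((t-1)*k) ((r-1)*k) else (r-1)*k+1 with hB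
        have key : ∀ t, B t ≤ B (t+1) ∧ B (t+1) ≤ B t + k := by
          intro t
          have f1 : t ≥ 1 → (t+1-1)*k = (t-1)*k + k := by
            intro h
            have e : t+1-1 = (t-1)+1 := by omega
            rw [e, add_mul, one_mul]
          have f2 : t = 0 → (t+1-1)*k = 0 := by
            intro h; subst h; norm_num
          have f3 : t ≤ r → (t-1)*k ≤ (r-1)*k := fun h => Nat.mul_le_mul (by omega) le_rfl
          have f4 : t = r → (r-1)*k ≤ (t-1)*k := fun h => Nat.mul_le_mul (by omega) le_rfl
          simp only [hB]
          split_ifs <;> (try exact ‹False›.elim) <;> omega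
        refine ⟨⟨B, monotone_nat_of_le_succ (fun t => (key t).1), ?_, ?_,
          pg_indep r k B (fun t => (key t).2)⟩, ?_, ?_⟩
        · simp [hB]
        · simp only [hB]; split_ifs <;> (try exact ‹False›.elim) <;> omega
        · simp only [hB]; split_ifs <;> (try exact ‹False›.elim) <;> omega
        · intro v w hv hw1 hw2 hadj
          have hd := (pg_adj_facts r k hadj).2
          have hwlt := w.isLt
          have e2 : (r-2+1-1)*k = (r-2)*k := by congr 1 <;> omega
          simp only [hB] at hv hw2
          split_ifs at hv hw2 <;> (try exact ‹False›.elim) <;> omega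
      · -- j ≠ r-2 : standard partition keeps (r-2)k away from class j
        set B : ℕ → ℕ := fun t => if t ≤ r
          then min (t*k) ((r-1)*k) else (r-1)*k+1 with hB
        have f2' : (r-1)*k ≤ r*k := Nat.mul_le_mul (by omega) le_rfl
        have key : ∀ t, B t ≤ B (t+1) ∧ B (t+1) ≤ B t + k := by
          intro t
          have f1 : (t+1)*k = t*k + k := by ring
          have f2 : t = r → (r-1)*k ≤ t*k := fun h => Nat.mul_le_mul (by omega) le_rfl
          simp only [hB]
          split_ifs <;> (try exact ‹False›.elim) <;> omega
        refine ⟨⟨B, monotone_nat_of_le_succ (fun t => (key t).1), ?_, ?_,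
          pg_indep r k B (fun t => (key t).2)⟩, ?_, ?_⟩
        · have f : 0*k = 0 := zero_mul k
          simp only [hB]; split_ifs <;> (try exact ‹False›.elim) <;> omega
        · simp only [hB]; split_ifs <;> (try exact ‹False›.elim) <;> omega
        · simp only [hB]; split_ifs <;> (try exact ‹False›.elim) <;> omega
        · intro v w hv hw1 hw2 hadj
          have hd := (pg_adj_facts r k hadj).2
          have hwlt := w.isLt
          have hsplit : (j+1 ≤ r-2 ∧ (j+1)*k ≤ (r-2)*k) ∨ (j = r-1 ∧ (r-1)*k ≤ j*k) := by
            rcases eq_or_ne j (r-1) with h | h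
            · exact Or.inr ⟨h, Nat.mul_le_mul (by omega) le_rfl⟩
            · exact Or.inl ⟨by omega, Nat.mul_le_mul (by omega) le_rfl⟩
          simp only [hB] at hv hw1 hw2
          split_ifs at hv hw1 hw2 <;> (try exact ‹False›.elim) <;> omega
    · -- 0 < i < r : the singleton vertex is not a multiple of k, hence isolated
      obtain ⟨i', rfl⟩ : ∃ i', i = i'+1 := ⟨i-1, by omega⟩
      have hi' : i'+1 ≤ r-1 := by omega
      set B : ℕ → ℕ := fun t => if t ≤ i'+1 then min (t*k) (i'*k+1)
        else min (i'*k+2+(t-(i'+2))*k) ((r-1)*k+1) with hB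
      have f5 : i'*k ≤ (r-1)*k := Nat.mul_le_mul (by omega) le_rfl
      have f7 : (i'+1)*k = i'*k + k := by ring
      have f5' : (i'+1)*k ≤ (r-1)*k := Nat.mul_le_mul (by omega) le_rfl
      have key : ∀ t, B t ≤ B (t+1) ∧ B (t+1) ≤ B t + k := by
        intro t
        have f1 : (t+1)*k = t*k + k := by ring
        have f2 : t ≥ i'+2 → (t+1-(i'+2))*k = (t-(i'+2))*k + k := by
          intro h
          have e : t+1-(i'+2) = (t-(i'+2))+1 := by omega
          rw [e, add_mul, one_mul]
        have f3 : t = i'+1 → t*k = i'*k + k := by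
          intro h; rw [h, add_mul, one_mul]
        have f4 : t = i'+1 → (t+1-(i'+2))*k = 0 := by
          intro h
          have e : t+1-(i'+2) = 0 := by omega
          rw [e, zero_mul]
        simp only [hB]
        split_ifs <;> (try exact ‹False›.elim) <;> omega
      have hBv : B (i'+1) = i'*k+1 := by
        simp only [hB]; split_ifs <;> (try exact ‹False›.elim) <;> omega
      refine ⟨⟨B, monotone_nat_of_le_succ (fun t => (key t).1), ?_, ?_,
        pg_indep r k B (fun t => (key t).2)⟩, ?_, ?_⟩
      · have f : 0*k = 0 := zero_mul k
        simp only [hB]; split_ifs <;> (try exact ‹False›.elim) <;> omega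
      · have f6 : i'*k + (r+1-(i'+2))*k = (r-1)*k := by
          rw [← add_mul]; congr 1 <;> omega
        simp only [hB]; split_ifs <;> (try exact ‹False›.elim) <;> omega
      · have f8 : (i'+1+1-(i'+2))*k = 0 := by
          have e : i'+1+1-(i'+2) = 0 := by omega
          rw [e, zero_mul]
        simp only [hB]; split_ifs <;> (try exact ‹False›.elim) <;> omega
      · intro v w hv _ _ hadj
        have hdvd := (pg_adj_facts r k hadj).1
        have hvB : (v:ℕ) = i'*k+1 := hv.trans hBv
        rw [hvB] at hdvd
        have h1 : k ∣ i'*k := dvd_mul_left k i'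
        have h2 : k ∣ (i'*k+1) - i'*k := Nat.dvd_sub hdvd h1
        rw [Nat.add_sub_cancel_left] at h2
        have := Nat.le_of_dvd one_pos h2
        omega
end

section
/- Let H be an ordered graph on [h] with r := χ_<(H) ≥ 2. If H is not flexible, then there exists i ∈ [r-1] and y ∈ [h] such that in every interval r-colouring Q_1 < ⋯ < Q_r of H, the union Q_1 ∪ ⋯ ∪ Q_i equals [y]; i.e., the number of vertices in the first i intervals is the same for all interval r-colourings of H. -/
open Finset

/-- `H` is flexible: for every `i` with `1 ≤ i ≤ χ_<(H) - 1` there is an interval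
`(χ_<(H)+1)`-colouring whose `i`-th class (0-indexed) is a singleton `{x}` such that `x`
has no neighbour in the class immediately before nor in the class immediately after it
(so `x` can be merged into either neighbouring class, yielding interval
`χ_<(H)`-colourings). -/
def Flexible {h : ℕ} (H : SimpleGraph (Fin h)) : Prop :=
  ∀ i, 1 ≤ i → i + 1 ≤ chiLt H →
    ∃ C : IColouring H (chiLt H + 1),
      C.b i + 1 = C.b (i + 1) ∧
      (∀ x w : Fin h, (x : ℕ) = C.b i →
        C.b (i - 1) ≤ (w : ℕ) → (w : ℕ) < C.b i → ¬ H.Adj x w) ∧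
      (∀ x w : Fin h, (x : ℕ) = C.b i →
        C.b (i + 1) ≤ (w : ℕ) → (w : ℕ) < C.b (i + 2) → ¬ H.Adj x w)

/-- Deleting an empty class from an `(r+1)`-colouring gives an `r`-colouring. -/
lemma delete_col {h : ℕ} {H : SimpleGraph (Fin h)} {r : ℕ} (C : IColouring H (r + 1))
    (k : ℕ) (hk : k < r + 1) (heq : C.b k = C.b (k + 1)) :
    Nonempty (IColouring H r) := by
  refine ⟨⟨fun j => if j ≤ k then C.b j else C.b (j + 1), ?_, ?_, ?_, ?_⟩⟩
  · apply monotone_nat_of_le_succ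
    intro j
    by_cases h1 : j + 1 ≤ k
    · simp only [if_pos (by omega : j ≤ k), if_pos h1]
      exact C.mono (by omega)
    · by_cases h2 : j ≤ k
      · simp only [if_pos h2, if_neg h1]
        exact C.mono (by omega)
      · simp only [if_neg h2, if_neg h1]
        exact C.mono (by omega)
  · simp [C.first]
  · by_cases h1 : r ≤ k
    · have hkr : k = r := by omega
      subst hkr
      simp only [if_pos h1]
      rw [heq]
      exact C.last
    · simp only [if_neg h1]; exact C.last
  · intro j hj v w h1 h2 h3 h4
    by_cases hc1 : j + 1 ≤ k
    · simp only [if_pos (by omega : j ≤ k), if_pos hc1] at h1 h2 h3 h4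
      exact C.indep j (by omega) v w h1 h2 h3 h4
    · by_cases hc2 : j ≤ k
      · have hjk : j = k := by omega
        simp only [if_pos hc2, if_neg hc1] at h1 h2 h3 h4
        subst hjk
        rw [heq] at h1 h3
        exact C.indep (j + 1) (by omega) v w h1 h2 h3 h4
      · simp only [if_neg hc2, if_neg hc1] at h1 h2 h3 h4
        exact C.indep (j + 1) (by omega) v w h1 h2 h3 h4

/-- Every minimum interval colouring has strictly increasing boundaries. -/
lemma strict_col {h : ℕ} {H : SimpleGraph (Fin h)} {r : ℕ} (hr : r = chiLt H)
    (hr2 : 1 ≤ r) (C : IColouring H r) {k : ℕ} (hk : k < r) :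
    C.b k < C.b (k + 1) := by
  rcases lt_or_eq_of_le (C.mono (by omega : k ≤ k + 1)) with hlt | heq
  · exact hlt
  · exfalso
    obtain ⟨r', rfl⟩ : ∃ r', r = r' + 1 := ⟨r - 1, by omega⟩
    have hne : Nonempty (IColouring H r') := delete_col C k hk heq
    have hle : chiLt H ≤ r' := Nat.sInf_le hne
    omega

/-- Two colourings differing at the `i`-th boundary produce a flexible witness. -/
lemma flex_witness {h : ℕ} {H : SimpleGraph (Fin h)} {r i : ℕ} (hi1 : 1 ≤ i)
    (hir : i + 1 ≤ r) (C C' : IColouring H r) (hlt : C.b i < C'.b i)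
    (hstrict : C'.b (i - 1) < C'.b i) :
    ∃ D : IColouring H (r + 1),
      D.b i + 1 = D.b (i + 1) ∧
      (∀ x w : Fin h, (x : ℕ) = D.b i →
        D.b (i - 1) ≤ (w : ℕ) → (w : ℕ) < D.b i → ¬ H.Adj x w) ∧
      (∀ x w : Fin h, (x : ℕ) = D.b i →
        D.b (i + 1) ≤ (w : ℕ) → (w : ℕ) < D.b (i + 2) → ¬ H.Adj x w) := by
  set a := C.b i with ha
  set a' := C'.b i with ha'
  have ha'h : a' ≤ h := by
    have := C'.mono (show i ≤ r by omega)
    rw [C'.last] at this; exact this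
  set f : ℕ → ℕ := fun k => if k < i then C'.b k else if k = i then a' - 1
      else max (C.b (k - 1)) a' with hf
  have e1 : ∀ k, k < i → f k = C'.b k := by intro k hk; simp [hf, if_pos hk]
  have e2 : f i = a' - 1 := by simp [hf]
  have e3 : ∀ k, i < k → f k = max (C.b (k - 1)) a' := by
    intro k hk
    simp [hf, if_neg (by omega : ¬ k < i), if_neg (by omega : ¬ k = i)]
  have hmono : Monotone f := by
    apply monotone_nat_of_le_succ
    intro k
    rcases lt_trichotomy (k + 1) i with hc | hc | hc
    · rw [e1 k (by omega), e1 (k + 1) hc]; exact C'.mono (by omega)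
    · rw [e1 k (by omega), hc, e2]
      have := C'.mono (show k ≤ i - 1 by omega)
      omega
    · rcases eq_or_lt_of_le (show i ≤ k by omega) with hk | hk
      · rw [← hk, e2, e3 (i + 1) (by omega)]
        exact le_trans (Nat.sub_le _ _) (le_max_right _ _)
      · rw [e3 k hk, e3 (k + 1) (by omega)]
        simp only [Nat.add_sub_cancel]
        exact max_le_max (C.mono (by omega)) le_rfl
  refine ⟨⟨f, hmono, ?_, ?_, ?_⟩, ?_, ?_, ?_⟩
  · rw [e1 0 (by omega)]; exact C'.first
  · rw [e3 (r + 1) (by omega)]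
    simp only [Nat.add_sub_cancel, C.last]
    exact max_eq_left ha'h
  · intro k hk v w h1 h2 h3 h4
    rcases lt_trichotomy (k + 1) i with hc | hc | hc
    · rw [e1 k (by omega)] at h1 h3
      rw [e1 (k + 1) hc] at h2 h4
      exact C'.indep k (by omega) v w h1 h2 h3 h4
    · rw [e1 k (by omega)] at h1 h3
      rw [hc, e2] at h2 h4
      have hki : k = i - 1 := by omega
      refine C'.indep k (by omega) v w h1 ?_ h3 ?_ <;>
        rw [hki, (by omega : i - 1 + 1 = i)] <;> omega
    · rcases eq_or_lt_of_le (show i ≤ k by omega) with hki | hki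
      · rw [← hki] at h1 h2 h3 h4
        rw [e2] at h1 h3
        rw [e3 (i + 1) (by omega)] at h2 h4
        simp only [Nat.add_sub_cancel] at h2 h4
        rw [max_eq_right hlt.le] at h2 h4
        have hvw : v = w := Fin.ext (by omega)
        subst hvw
        exact fun hA => H.irrefl hA
      · rw [e3 k hki] at h1 h3
        rw [e3 (k + 1) (by omega)] at h2 h4
        simp only [Nat.add_sub_cancel] at h2 h4
        rcases le_or_gt (C.b k) a' with hca | hca
        · exfalso
          have h1' : a' ≤ (v : ℕ) := le_trans (le_max_right _ _) h1
          rw [max_eq_right hca] at h2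
          omega
        · rw [max_eq_left hca.le] at h2 h4
          have h1' : C.b (k - 1) ≤ (v : ℕ) := le_trans (le_max_left _ _) h1
          have h3' : C.b (k - 1) ≤ (w : ℕ) := le_trans (le_max_left _ _) h3
          have hk1 : k - 1 + 1 = k := by omega
          refine C.indep (k - 1) (by omega) v w h1' ?_ h3' ?_ <;> rw [hk1] <;> omega
  · show f i + 1 = f (i + 1)
    rw [e2, e3 (i + 1) (by omega)]
    simp only [Nat.add_sub_cancel]
    rw [max_eq_right hlt.le]
    omega
  · intro x w hx h1 h2
    dsimp only at hx h1 h2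
    rw [e2] at hx h2
    rw [e1 (i - 1) (by omega)] at h1
    refine C'.indep (i - 1) (by omega) x w ?_ ?_ ?_ ?_ <;>
      [skip; rw [(by omega : i - 1 + 1 = i)]; skip; rw [(by omega : i - 1 + 1 = i)]] <;>
      omega
  · intro x w hx h1 h2
    dsimp only at hx h1 h2
    rw [e2] at hx
    rw [e3 (i + 1) (by omega)] at h1
    rw [e3 (i + 2) (by omega)] at h2
    simp only [Nat.add_sub_cancel] at h1
    rw [(by omega : i + 2 - 1 = i + 1)] at h2
    rw [max_eq_right hlt.le] at h1
    rcases le_or_gt (C.b (i + 1)) a' with hca | hca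
    · rw [max_eq_right hca] at h2
      omega
    · rw [max_eq_left hca.le] at h2
      exact C.indep i (by omega) x w (by omega) (by omega) (by omega) (by omega)
/-- If `H` (with `χ_<(H) = r ≥ 2`) is not flexible then there are `i ∈ [r-1]` and `y`
such that in every interval `r`-colouring of `H` the first `i` classes together contain
exactly the first `y` vertices. -/
theorem stmt12 {h : ℕ} (H : SimpleGraph (Fin h)) (r : ℕ) (hr : r = chiLt H) (hr2 : 2 ≤ r)
    (hnf : ¬ Flexible H) :
    ∃ i, 1 ≤ i ∧ i ≤ r - 1 ∧ ∃ y, y ≤ h ∧ ∀ C : IColouring H r, C.b i = y := by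
  rw [Flexible] at hnf
  push_neg at hnf
  obtain ⟨i, hi1, hir, hni⟩ := hnf
  rw [← hr] at hir hni
  have hS : {s | Nonempty (IColouring H s)}.Nonempty := by
    by_contra hS
    rw [Set.not_nonempty_iff_eq_empty] at hS
    have h0 : chiLt H = 0 := by rw [chiLt, hS, Nat.sInf_empty]
    omega
  have hmem : Nonempty (IColouring H (chiLt H)) := Nat.sInf_mem hS
  rw [← hr] at hmem
  obtain ⟨C0⟩ := hmem
  refine ⟨i, hi1, by omega, C0.b i, ?_, ?_⟩
  · have := C0.mono (show i ≤ r by omega)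
    rw [C0.last] at this; exact this
  · intro C
    by_contra hne'
    rcases lt_or_gt_of_ne hne' with hlt | hlt
    · obtain ⟨D, hD⟩ := flex_witness hi1 hir C C0 hlt
        (lt_of_lt_of_eq (strict_col hr (by omega) C0 (by omega : i - 1 < r))
          (by rw [(by omega : i - 1 + 1 = i)]))
      obtain ⟨x, w, hx, hw1, hw2, hA⟩ := hni D hD.1 hD.2.1
      exact hD.2.2 x w hx hw1 hw2 hA
    · obtain ⟨D, hD⟩ := flex_witness hi1 hir C0 C hlt
        (lt_of_lt_of_eq (strict_col hr (by omega) C (by omega : i - 1 < r))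
          (by rw [(by omega : i - 1 + 1 = i)]))
      obtain ⟨x, w, hx, hw1, hw2, hA⟩ := hni D hD.1 hD.2.1
      exact hD.2.2 x w hx hw1 hw2 hA
end

section
/- Let H be an (ordered) graph on h vertices, and let 0 < 1/n ≪ γ ≪ α, β, 1/h, 1/s_1, 1/s_2. Let G be an n-vertex graph, x, y ∈ V(G), and A ⊆ V(G)\{x,y} with |A| ≥ αn. Suppose for every z ∈ A there are at least βn^{s_1 h - 1} sets X of size s_1 h - 1 with both G[X ∪ {x}] and G[X ∪ {z}] having perfect H-tilings, and at least βn^{s_2 h - 1} sets Y of size s_2 h - 1 with both G[Y ∪ {y}] and G[Y ∪ {z}] having perfect H-tilings. Then there are at least γn^{(s_1+s_2)h - 1} sets Z of size (s_1+s_2)h - 1 such that both G[Z ∪ {x}] and G[Z ∪ {y}] have perfect H-tilings. -/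
open Finset

/-- The family of "chains" of size `s` between `x` and `y`: sets `X` of size `s` such
that both `G[X ∪ {x}]` and `G[X ∪ {y}]` have perfect `H`-tilings. -/
def chainSets {h n : ℕ} (H : SimpleGraph (Fin h)) (G : SimpleGraph (Fin n))
    (x y : Fin n) (s : ℕ) : Set (Finset (Fin n)) :=
  {X | X.card = s ∧ x ∉ X ∧ y ∉ X ∧
    TilesOn H G (↑(insert x X) : Set (Fin n)) ∧ TilesOn H G (↑(insert y X) : Set (Fin n))}

/-! Glue a chain `X` from `x` to `z` and a chain `Y` from `z` to `y` into the chain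
`{z} ∪ X ∪ Y` from `x` to `y`: the tiling of `{x} ∪ X` together with that of `{z} ∪ Y` tiles
`{x, z} ∪ X ∪ Y`, and symmetrically for `y`. Averaging over the `αn` choices of `z ∈ A`, all but
`O(n^{a-1})` of the `βn^a` chains `X` and all but `O(n^{b-1})` of the `βn^b` chains `Y` are
disjoint as required, so there are `≥ αβ²/4 · n^{a+b+1}` glued triples `(z, X, Y)`; a chain `Z`
arises from at most `|Z| 2^{|Z|}` of them, since `z ∈ Z` and `X ⊆ Z` determine `Y`. -/

lemma TilesOn.union {h n : ℕ} {H : SimpleGraph (Fin h)} {G : SimpleGraph (Fin n)}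
    {S T : Set (Fin n)} (hS : TilesOn H G S) (hT : TilesOn H G T) (hST : Disjoint S T) :
    TilesOn H G (S ∪ T) := by
  obtain ⟨𝒮, h𝒮, hS⟩ := hS
  obtain ⟨𝒯, h𝒯, hT⟩ := hT
  refine ⟨𝒮 ∪ 𝒯, ?_, ?_⟩
  · rintro f (hf | hf)
    · exact ⟨(h𝒮 f hf).1, (h𝒮 f hf).2.trans Set.subset_union_left⟩
    · exact ⟨(h𝒯 f hf).1, (h𝒯 f hf).2.trans Set.subset_union_right⟩
  · rintro v (hv | hv)
    · obtain ⟨f, ⟨hf, hvf⟩, huniq⟩ := hS v hv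
      refine ⟨f, ⟨Or.inl hf, hvf⟩, ?_⟩
      rintro g ⟨hg | hg, hvg⟩
      · exact huniq g ⟨hg, hvg⟩
      · exact absurd ((h𝒯 g hg).2 hvg) (Set.disjoint_left.mp hST hv)
    · obtain ⟨f, ⟨hf, hvf⟩, huniq⟩ := hT v hv
      refine ⟨f, ⟨Or.inr hf, hvf⟩, ?_⟩
      rintro g ⟨hg | hg, hvg⟩
      · exact absurd ((h𝒮 g hg).2 hvg) (Set.disjoint_right.mp hST hv)
      · exact huniq g ⟨hg, hvg⟩

lemma insert_union_mem_chainSets {h n : ℕ} {H : SimpleGraph (Fin h)} {G : SimpleGraph (Fin n)}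
    {x y z : Fin n} {a b : ℕ} {X Y : Finset (Fin n)} (hX : X ∈ chainSets H G x z a)
    (hY : Y ∈ chainSets H G y z b) (hxz : x ≠ z) (hyz : y ≠ z) (hyX : y ∉ X)
    (hXY : Disjoint (insert x X) Y) :
    insert z (X ∪ Y) ∈ chainSets H G x y (a + b + 1) := by
  obtain ⟨hXa, hxX, hzX, htx, htzX⟩ := hX
  obtain ⟨hYb, hyY, hzY, hty, htzY⟩ := hY
  rw [disjoint_insert_left] at hXY
  obtain ⟨hxY, hXY⟩ := hXY
  refine ⟨?_, by simp [hxz, hxX, hxY], by simp [hyz, hyX, hyY], ?_, ?_⟩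
  · rw [card_insert_of_notMem (by simp [hzX, hzY]), card_union_of_disjoint hXY, hXa, hYb]
  · have hsplit : insert x (insert z (X ∪ Y)) = insert x X ∪ insert z Y := by
      ext; simp only [mem_insert, mem_union]; tauto
    rw [hsplit, coe_union]
    exact htx.union htzY (by simp [hxz.symm, hxY, hzX, hXY])
  · have hsplit : insert y (insert z (X ∪ Y)) = insert y Y ∪ insert z X := by
      ext; simp only [mem_insert, mem_union]; tauto
    rw [hsplit, coe_union]
    exact hty.union htzX (by simp [hyz.symm, hyX, hzY, hXY.symm])

lemma card_filter_card_eq_and_mem_le {V : Type*} [Fintype V] [DecidableEq V] (k : ℕ) (v : V) :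
    #{X : Finset V | #X = k ∧ v ∈ X} ≤ k * Fintype.card V ^ (k - 1) := by
  rcases k with _ | k
  · simp
  calc #{X : Finset V | #X = k + 1 ∧ v ∈ X}
      ≤ #((univ : Finset V).powersetCard k) := by
        refine card_le_card_of_injOn (fun X => X.erase v) (fun X hX => ?_)
          (fun X hX X' hX' he => ?_)
        · simp only [mem_coe, mem_filter, mem_univ, true_and] at hX
          simp [mem_powersetCard, card_erase_of_mem hX.2, hX.1]
        · simp only [mem_coe, mem_filter, mem_univ, true_and] at hX hX'
          rw [← insert_erase hX.2, ← insert_erase hX'.2]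
          exact congrArg (insert v) he
    _ = (Fintype.card V).choose k := by rw [card_powersetCard, card_univ]
    _ ≤ Fintype.card V ^ k := Nat.choose_le_pow _ _
    _ ≤ (k + 1) * Fintype.card V ^ k := Nat.le_mul_of_pos_left _ k.succ_pos

lemma card_le_card_filter_disjoint_add {V : Type*} [Fintype V] [DecidableEq V]
    {𝒮 : Finset (Finset V)} {k : ℕ} (h𝒮 : ∀ X ∈ 𝒮, #X = k) (S : Finset V) :
    #𝒮 ≤ #(𝒮.filter (Disjoint S)) + #S * (k * Fintype.card V ^ (k - 1)) := by
  rw [← card_filter_add_card_filter_not (Disjoint S)]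
  gcongr
  calc #(𝒮.filter fun X => ¬Disjoint S X)
      ≤ #(S.biUnion fun v => {X : Finset V | #X = k ∧ v ∈ X}) := by
        refine card_le_card fun X hX => ?_
        rw [mem_filter] at hX
        obtain ⟨v, hvS, hvX⟩ := not_disjoint_iff.mp hX.2
        simp only [mem_biUnion, mem_filter, mem_univ, true_and]
        exact ⟨v, hvS, h𝒮 X hX.1, hvX⟩
    _ ≤ ∑ v ∈ S, #{X : Finset V | #X = k ∧ v ∈ X} := card_biUnion_le
    _ ≤ #S * (k * Fintype.card V ^ (k - 1)) :=
        sum_le_card_nsmul _ _ _ fun v _ => card_filter_card_eq_and_mem_le k v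

lemma mul_pow_pred_le {C ε t : ℝ} {k : ℕ} (hε : 0 ≤ ε) (ht : 0 ≤ t) (h : C * k ≤ ε * t) :
    C * k * t ^ (k - 1) ≤ ε * t ^ k := by
  rcases k with _ | k
  · simpa using hε
  · calc C * ↑(k + 1) * t ^ (k + 1 - 1) ≤ ε * t * t ^ k := by
          rw [Nat.add_sub_cancel]; gcongr
      _ = ε * t ^ (k + 1) := by ring

lemma half_le_card_filter_disjoint {V : Type*} [Fintype V] [DecidableEq V]
    {𝒮 : Finset (Finset V)} {k : ℕ} (h𝒮 : ∀ X ∈ 𝒮, #X = k) (S : Finset V) {β : ℝ}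
    (hβ : 0 ≤ β) (h𝒮β : β * Fintype.card V ^ k ≤ #𝒮) (hS : 2 * #S * k ≤ β * Fintype.card V) :
    β / 2 * Fintype.card V ^ k ≤ #(𝒮.filter (Disjoint S)) := by
  have hcount : (#𝒮 : ℝ) ≤ #(𝒮.filter (Disjoint S)) + #S * (k * Fintype.card V ^ (k - 1)) := by
    exact_mod_cast card_le_card_filter_disjoint_add h𝒮 S
  have hbad := mul_pow_pred_le (C := #S) (by positivity) (Fintype.card V).cast_nonneg
    (show #S * k ≤ β / 2 * Fintype.card V by linarith)
  linarith

lemma mul_le_card_sigma {ι : Type*} {κ : ι → Type*} {s : Finset ι} {t : ∀ i, Finset (κ i)}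
    {q : ℝ} (h : ∀ i ∈ s, q ≤ #(t i)) : #s * q ≤ #(s.sigma t) := by
  rw [card_sigma, Nat.cast_sum, ← nsmul_eq_mul]
  exact card_nsmul_le_sum s _ q h

lemma card_le_mul_card_of_insert_union_mem {V : Type*} [DecidableEq V]
    {T : Finset ((_ : V) × (_ : Finset V) × Finset V)} {𝒵 : Finset (Finset V)} {c : ℕ}
    (h𝒵 : ∀ Z ∈ 𝒵, #Z = c)
    (hT : ∀ t ∈ T, t.1 ∉ t.2.2 ∧ Disjoint t.2.1 t.2.2 ∧ insert t.1 (t.2.1 ∪ t.2.2) ∈ 𝒵) :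
    #T ≤ c * 2 ^ c * #𝒵 := by
  calc #T ≤ #(𝒵.sigma fun Z => Z ×ˢ Z.powerset) := by
        refine card_le_card_of_injOn (fun t => ⟨insert t.1 (t.2.1 ∪ t.2.2), (t.1, t.2.1)⟩)
          (fun t ht => ?_) (fun t ht t' ht' he => ?_)
        · simp only [mem_coe, mem_sigma, mem_product, mem_powerset, mem_insert_self, true_and]
          exact ⟨(hT t ht).2.2, subset_union_left.trans (subset_insert _ _)⟩
        · obtain ⟨z, X, Y⟩ := t
          obtain ⟨z', X', Y'⟩ := t'
          simp only [Sigma.mk.injEq, heq_eq_eq, Prod.mk.injEq] at he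
          obtain ⟨hZ, rfl, rfl⟩ := he
          obtain ⟨hzY, hXY, -⟩ : z ∉ Y ∧ Disjoint X Y ∧ _ := hT _ ht
          obtain ⟨hzY', hXY', -⟩ : z ∉ Y' ∧ Disjoint X Y' ∧ _ := hT _ ht'
          have hY : ∀ {Y}, z ∉ Y → Disjoint X Y → insert z (X ∪ Y) \ insert z X = Y := fun hz h =>
            by rw [← insert_union, union_sdiff_cancel_left (disjoint_insert_left.2 ⟨hz, h⟩)]
          rw [← hY hzY hXY, ← hY hzY' hXY', hZ]
    _ = c * 2 ^ c * #𝒵 := by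
        rw [card_sigma, sum_congr rfl fun Z hZ => by rw [card_product, card_powerset, h𝒵 Z hZ],
          sum_const, smul_eq_mul, mul_comm]

lemma le_ncard_chainSets_add_add_one {h n : ℕ} (H : SimpleGraph (Fin h))
    (G : SimpleGraph (Fin n)) {x y : Fin n} {A : Set (Fin n)} {a b : ℕ} {α β : ℝ} (hβ : 0 ≤ β)
    (hn : 2 * (a + 1) * (b + 1) ≤ β * n) (hxA : x ∉ A) (hyA : y ∉ A) (hA : α * n ≤ A.ncard)
    (hch : ∀ z ∈ A, β * n ^ a ≤ (chainSets H G x z a).ncard ∧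
      β * n ^ b ≤ (chainSets H G y z b).ncard) :
    α * n * (β / 2 * n ^ a) * (β / 2 * n ^ b) ≤
      (a + b + 1) * 2 ^ (a + b + 1) * (chainSets H G x y (a + b + 1)).ncard := by
  classical
  set 𝒞 : Fin n → Fin n → ℕ → Finset (Finset (Fin n)) :=
    fun u v s => (chainSets H G u v s).toFinite.toFinset
  have hcard : ∀ u v s, (chainSets H G u v s).ncard = #(𝒞 u v s) :=
    fun u v s => Set.ncard_eq_toFinset_card _ _
  have h𝒞 : ∀ {u v s X}, X ∈ 𝒞 u v s → #X = s := fun hX => (Set.Finite.mem_toFinset _).1 hX |>.1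
  set 𝒳 := fun z => (𝒞 x z a).filter (Disjoint {y})
  set 𝒴 := fun z X => (𝒞 y z b).filter (Disjoint (insert x X))
  set T := A.toFinite.toFinset.sigma fun z => (𝒳 z).sigma (𝒴 z)
  have h𝒳 : ∀ z ∈ A, β / 2 * n ^ a ≤ #(𝒳 z) := fun z hz => by
    have := half_le_card_filter_disjoint (𝒮 := 𝒞 x z a) (fun X => h𝒞) {y} hβ
      (by rw [Fintype.card_fin, ← hcard]; exact (hch z hz).1)
      (by rw [Fintype.card_fin, card_singleton, Nat.cast_one]; nlinarith)
    rwa [Fintype.card_fin] at this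
  have h𝒴 : ∀ z ∈ A, ∀ X ∈ 𝒳 z, β / 2 * n ^ b ≤ #(𝒴 z X) := fun z hz X hX => by
    have hxX : (#(insert x X) : ℝ) ≤ a + 1 := by
      exact_mod_cast (card_insert_le x X).trans_eq (by rw [h𝒞 (mem_filter.1 hX).1])
    have := half_le_card_filter_disjoint (𝒮 := 𝒞 y z b) (fun Y => h𝒞) (insert x X) hβ
      (by rw [Fintype.card_fin, ← hcard]; exact (hch z hz).2)
      (by rw [Fintype.card_fin]; nlinarith)
    rwa [Fintype.card_fin] at this
  have hT : α * n * (β / 2 * n ^ a) * (β / 2 * n ^ b) ≤ #T := by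
    rw [mul_assoc]
    calc α * n * (β / 2 * n ^ a * (β / 2 * n ^ b))
        ≤ #A.toFinite.toFinset * (β / 2 * n ^ a * (β / 2 * n ^ b)) := by
          gcongr; rwa [← Set.ncard_eq_toFinset_card]
      _ ≤ #T := mul_le_card_sigma fun z hz =>
          (mul_le_mul_of_nonneg_right (h𝒳 z (by simpa using hz)) (by positivity)).trans
            (mul_le_card_sigma (h𝒴 z (by simpa using hz)))
  have hglue : #T ≤ (a + b + 1) * 2 ^ (a + b + 1) * #(𝒞 x y (a + b + 1)) := by
    refine card_le_mul_card_of_insert_union_mem (fun Z => h𝒞) ?_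
    rintro ⟨z, X, Y⟩ ht
    simp only [T, 𝒳, 𝒴, 𝒞, mem_sigma, mem_filter, Set.Finite.mem_toFinset] at ht
    obtain ⟨hzA, ⟨hX, hyX⟩, hY, hXY⟩ := ht
    refine ⟨hY.2.2.1, (disjoint_insert_left.1 hXY).2, (Set.Finite.mem_toFinset _).2 ?_⟩
    exact insert_union_mem_chainSets hX hY (fun h => hxA (h ▸ hzA))
      (fun h => hyA (h ▸ hzA)) (disjoint_singleton_left.1 hyX) hXY
  rw [hcard]
  calc _ ≤ (#T : ℝ) := hT
    _ ≤ _ := by exact_mod_cast hglue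

theorem stmt14_general (α β : ℝ) (hα0 : 0 < α) (hβ0 : 0 < β)
    (h s₁ s₂ : ℕ) (hh : 0 < h) (hs₁ : 0 < s₁) (hs₂ : 0 < s₂) :
    ∃ γ : ℝ, 0 < γ ∧ ∃ n₀ : ℕ, ∀ n, n₀ ≤ n →
      ∀ (H : SimpleGraph (Fin h)) (G : SimpleGraph (Fin n)) (x y : Fin n)
        (A : Set (Fin n)), x ∉ A → y ∉ A → α * n ≤ (A.ncard : ℝ) →
        (∀ z ∈ A,
          β * (n : ℝ) ^ (s₁ * h - 1) ≤ ((chainSets H G x z (s₁ * h - 1)).ncard : ℝ) ∧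
          β * (n : ℝ) ^ (s₂ * h - 1) ≤ ((chainSets H G y z (s₂ * h - 1)).ncard : ℝ)) →
        γ * (n : ℝ) ^ ((s₁ + s₂) * h - 1) ≤
          ((chainSets H G x y ((s₁ + s₂) * h - 1)).ncard : ℝ) := by
  set a := s₁ * h - 1
  set b := s₂ * h - 1
  have hc : (s₁ + s₂) * h - 1 = a + b + 1 := by
    have := Nat.mul_pos hs₁ hh
    have := Nat.mul_pos hs₂ hh
    rw [add_mul]; omega
  rw [hc]
  refine ⟨α * β ^ 2 / (4 * ((a + b + 1) * 2 ^ (a + b + 1))), by positivity,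
    ⌈2 * (a + 1) * (b + 1) / β⌉₊, fun n hn H G x y A hxA hyA hA hch => ?_⟩
  have hn' : 2 * (a + 1) * (b + 1) ≤ β * n := by
    rw [← div_le_iff₀' hβ0]; exact Nat.ceil_le.1 hn
  have hglue := le_ncard_chainSets_add_add_one H G hβ0.le hn' hxA hyA hA hch
  rw [div_mul_eq_mul_div, div_le_iff₀ (by positivity)]
  linear_combination 4 * hglue

/-- Concatenation of chains: for all `α, β ∈ (0,1)` and `h, s₁, s₂ ≥ 1` there are
`γ > 0` and `n₀` such that for all `n ≥ n₀`: if `A ⊆ V(G) \ {x,y}` with `|A| ≥ αn` and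
every `z ∈ A` has at least `βn^{s₁h-1}` chains of size `s₁h-1` to `x` and at least
`βn^{s₂h-1}` chains of size `s₂h-1` to `y`, then there are at least
`γn^{(s₁+s₂)h-1}` chains of size `(s₁+s₂)h-1` between `x` and `y`. -/
theorem stmt14 (α β : ℝ) (hα0 : 0 < α) (hα1 : α < 1) (hβ0 : 0 < β) (hβ1 : β < 1)
    (h s₁ s₂ : ℕ) (hh : 0 < h) (hs₁ : 0 < s₁) (hs₂ : 0 < s₂) :
    ∃ γ : ℝ, 0 < γ ∧ ∃ n₀ : ℕ, ∀ n, n₀ ≤ n →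
      ∀ (H : SimpleGraph (Fin h)) (G : SimpleGraph (Fin n)) (x y : Fin n)
        (A : Set (Fin n)), x ∉ A → y ∉ A → α * n ≤ (A.ncard : ℝ) →
        (∀ z ∈ A,
          β * (n : ℝ) ^ (s₁ * h - 1) ≤ ((chainSets H G x z (s₁ * h - 1)).ncard : ℝ) ∧
          β * (n : ℝ) ^ (s₂ * h - 1) ≤ ((chainSets H G y z (s₂ * h - 1)).ncard : ℝ)) →
        γ * (n : ℝ) ^ ((s₁ + s₂) * h - 1) ≤
          ((chainSets H G x y ((s₁ + s₂) * h - 1)).ncard : ℝ) :=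
  stmt14_general α β hα0 hβ0 h s₁ s₂ hh hs₁ hs₂
end
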